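/- arXiv:2103.14284 — 14 statements merged into one kernel-verified Lean document; each statement's English description precedes it below -/
import Mathlib

section
/- Let G be a finite nilpotent group and let H be a non-trivial proper subgroup of G that is an isolated vertex of Γ(G); that is, for every non-trivial proper subgroup K of G distinct from H, the setwise product HK is not equal to G. Then H ⊆ Φ(G). -/
open scoped Pointwise

/-- In a finite nilpotent group, any isolated vertex of `Γ(G)` is contained in
the Frattini subgroup. -/
theorem isolated_le_frattini_of_nilpotent {G : Type*} [Group G] [Finite G]
    [Group.IsNilpotent G] (H : Subgroup G) (hbot : H ≠ ⊥) (htop : H ≠ ⊤)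
    (hiso : ∀ K : Subgroup G, K ≠ ⊥ → K ≠ ⊤ → K ≠ H →
      (H : Set G) * (K : Set G) ≠ Set.univ) :
    H ≤ frattini G := by
  rw [frattini, Order.radical, le_iInf_iff]
  intro M
  rw [le_iInf_iff]
  intro hM
  by_contra hle
  have hMnormal : M.Normal :=
    Subgroup.NormalizerCondition.normal_of_coatom M (normalizerCondition_of_isNilpotent (G := G)) hM
  have hsup : H ⊔ M = ⊤ := hM.2 _ (lt_of_le_of_ne le_sup_right (by
    intro h; exact hle (h ▸ le_sup_left)))
  have hMbot : M ≠ ⊥ := by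
    rintro rfl
    exact htop (hM.2 H (bot_lt_iff_ne_bot.mpr hbot))
  have hMH : M ≠ H := by rintro rfl; exact hle le_rfl
  have := hiso M hMbot hM.1 hMH
  apply this
  rw [← Subgroup.mul_normal H M, hsup]
  simp
end

section
/- Let G be a finite non-trivial solvable group such that Γ(G) has no edges; that is, for any two distinct non-trivial proper subgroups H and K of G, the setwise product HK is not equal to G. Then G is a cyclic group of prime-power order. -/
/-!
A solvable non-trivial group has a normal maximal subgroup `N` (any maximal subgroup containing
the derived subgroup). For normal `N` the product `N * K` is the subgroup `N ⊔ K`, which is all of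
`G` as soon as `K ⊄ N`; so edgelessness forces every proper subgroup into `N`. Then any element
outside `N` generates `G`, and a Sylow `p`-subgroup for a prime `p` dividing `[G : N]` cannot lie in
`N`, so it is all of `G`.
-/

open scoped Pointwise

namespace Subgroup

variable {G : Type*} [Group G]

theorem exists_normal_isCoatom_of_isSolvable [Finite G] [Nontrivial G] [Group.IsSolvable G] :
    ∃ N : Subgroup G, IsCoatom N ∧ N.Normal := by
  obtain ⟨N, hN, hle⟩ := (IsCoatomic.eq_top_or_exists_le_coatom (_root_.commutator G)).resolve_left
    (Group.IsSolvable.commutator_lt_top_of_nontrivial G).ne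
  exact ⟨N, hN, Normal.of_commutator_le G hle⟩

theorem le_of_isCoatom_of_coe_mul_ne_univ {N K : Subgroup G} [N.Normal] (hN : IsCoatom N)
    (hNK : (N : Set G) * (K : Set G) ≠ Set.univ) : K ≤ N := by
  by_contra hKN
  have hsup : N ⊔ K = ⊤ := hN.2 _ (left_lt_sup.mpr hKN)
  exact hNK (by rw [← normal_mul, hsup, coe_top])

theorem isCyclic_of_forall_ne_top_le {N : Subgroup G} (hN : N ≠ ⊤)
    (hle : ∀ K : Subgroup G, K ≠ ⊤ → K ≤ N) : IsCyclic G := by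
  obtain ⟨x, hx⟩ : ∃ x, x ∉ N := by simpa [eq_top_iff'] using hN
  refine isCyclic_iff_exists_zpowers_eq_top.mpr ⟨x, ?_⟩
  by_contra hne
  exact hx (hle _ hne (mem_zpowers x))

theorem isPGroup_of_forall_ne_top_le [Finite G] {N : Subgroup G} {p : ℕ} [Fact p.Prime]
    (hp : p ∣ N.index) (hle : ∀ K : Subgroup G, K ≠ ⊤ → K ≤ N) : IsPGroup p G := by
  obtain ⟨P⟩ : Nonempty (Sylow p G) := inferInstance
  have hPtop : (P : Subgroup G) = ⊤ := by
    by_contra hne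
    exact P.not_dvd_index (hp.trans (index_dvd_of_le (hle _ hne)))
  exact (hPtop ▸ P.isPGroup').of_equiv topEquiv

end Subgroup

open Subgroup in
/-- If `G` is a finite non-trivial solvable group such that `Γ(G)` has no edges,
then `G` is a cyclic group of prime-power order. -/
theorem cyclic_pGroup_of_comaximal_edgeless {G : Type*} [Group G] [Finite G]
    [Nontrivial G] [Group.IsSolvable G]
    (h : ∀ H K : Subgroup G, H ≠ ⊥ → H ≠ ⊤ → K ≠ ⊥ → K ≠ ⊤ → H ≠ K →
      (H : Set G) * (K : Set G) ≠ Set.univ) :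
    IsCyclic G ∧ ∃ p n : ℕ, p.Prime ∧ Nat.card G = p ^ n := by
  obtain ⟨N, hN, hNormal⟩ := exists_normal_isCoatom_of_isSolvable (G := G)
  have hle : ∀ K : Subgroup G, K ≠ ⊤ → K ≤ N := by
    intro K hK
    by_cases hKbot : K = ⊥
    · exact hKbot ▸ bot_le
    by_cases hKN : K = N
    · exact hKN.le
    refine le_of_isCoatom_of_coe_mul_ne_univ hN (h N K ?_ hN.1 hKbot hK (Ne.symm hKN))
    rintro rfl
    exact hK (hN.2 K (bot_lt_iff_ne_bot.mpr hKbot))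
  have hindex : N.index ≠ 1 := index_eq_one.not.mpr hN.1
  have : Fact N.index.minFac.Prime := ⟨Nat.minFac_prime hindex⟩
  obtain ⟨n, hn⟩ := IsPGroup.iff_card.mp (isPGroup_of_forall_ne_top_le (Nat.minFac_dvd _) hle)
  exact ⟨isCyclic_of_forall_ne_top_le hN.1 hle, _, n, Fact.out, hn⟩
end

section
/- Let G be a finite group that possesses a maximal subgroup which is normal in G. Then any two non-isolated vertices of Γ(G) lie in the same connected component; that is, any two non-trivial proper subgroups of G, each adjacent to at least one vertex of Γ(G), are joined by a path in Γ(G). -/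
open scoped Pointwise

/-- The co-maximal subgroup graph `Γ(G)`: vertices are the non-trivial proper
subgroups of `G`, and two distinct vertices `H`, `K` are adjacent iff `HK = G`
as a setwise product. -/
def comaximalGraph (G : Type*) [Group G] :
    SimpleGraph {H : Subgroup G // H ≠ ⊥ ∧ H ≠ ⊤} where
  Adj H K := H ≠ K ∧ ((H.1 : Set G) * (K.1 : Set G) = Set.univ)
  symm := by
    constructor
    rintro H K ⟨hne, hmul⟩
    refine ⟨hne.symm, ?_⟩
    have h := congrArg (fun s : Set G => s⁻¹) hmul
    simpa [mul_inv_rev] using h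
  loopless := by
    constructor
    rintro H ⟨hne, _⟩
    exact hne rfl

/-! A normal maximal subgroup `M` is adjacent to every vertex `X ≰ M`, since then `XM = X ⊔ M = G`.
A vertex `X ≤ M` with a neighbour `L` has `ML ⊇ XL = G`, so `L` is also a neighbour of `M`
(and `L ≠ M`, as `MM = M`). Hence every non-isolated vertex is joined to `M` by a path of
length at most two. -/

namespace Subgroup

variable {G : Type*} [Group G]

theorem coe_mul_eq_univ_of_le {H K L : Subgroup G} (hHK : H ≤ K)
    (hHL : (H : Set G) * (L : Set G) = Set.univ) : (K : Set G) * (L : Set G) = Set.univ :=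
  Set.eq_univ_of_univ_subset (hHL ▸ Set.mul_subset_mul_right hHK)

theorem coe_mul_self_ne_univ {M : Subgroup G} (hM : M ≠ ⊤) :
    (M : Set G) * (M : Set G) ≠ Set.univ :=
  fun h => hM (SetLike.coe_injective (M.toSubmonoid.coe_mul_self_eq.symm.trans h))

theorem coe_mul_eq_univ_of_not_le {H M : Subgroup G} (hM : IsCoatom M) [M.Normal]
    (hHM : ¬ H ≤ M) : (H : Set G) * (M : Set G) = Set.univ := by
  rw [← mul_normal, (hM.not_le_iff_codisjoint.mp hHM).symm.eq_top, coe_top]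

end Subgroup

namespace comaximalGraph

variable {G : Type*} [Group G]

open Subgroup

theorem reachable_of_adj_of_isCoatom {X L M : {H : Subgroup G // H ≠ ⊥ ∧ H ≠ ⊤}}
    (hM : IsCoatom M.1) [M.1.Normal] (hXL : (comaximalGraph G).Adj X L) :
    (comaximalGraph G).Reachable X M := by
  by_cases hXM : X.1 ≤ M.1
  · have hML : (M.1 : Set G) * (L.1 : Set G) = Set.univ := coe_mul_eq_univ_of_le hXM hXL.2
    have hMneL : M ≠ L := by
      rintro rfl
      exact coe_mul_self_ne_univ hM.1 hML
    exact hXL.reachable.trans (show (comaximalGraph G).Adj M L from ⟨hMneL, hML⟩).symm.reachable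
  · by_cases hXeqM : X = M
    · exact hXeqM ▸ SimpleGraph.Reachable.refl X
    · exact SimpleGraph.Adj.reachable ⟨hXeqM, coe_mul_eq_univ_of_not_le hM hXM⟩

end comaximalGraph

theorem comaximal_reachable_of_normal_maximal_general {G : Type*} [Group G]
    (hM : ∃ M : Subgroup G, IsCoatom M ∧ M.Normal)
    (H K : {H : Subgroup G // H ≠ ⊥ ∧ H ≠ ⊤})
    (hH : ∃ L, (comaximalGraph G).Adj H L)
    (hK : ∃ L, (comaximalGraph G).Adj K L) :
    (comaximalGraph G).Reachable H K := by
  obtain ⟨M, hMcoatom, hMnormal⟩ := hM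
  have hMne_bot : M ≠ ⊥ := by
    rintro rfl
    exact H.2.2 (hMcoatom.2 _ (bot_lt_iff_ne_bot.mpr H.2.1))
  let Mv : {H : Subgroup G // H ≠ ⊥ ∧ H ≠ ⊤} := ⟨M, hMne_bot, hMcoatom.1⟩
  obtain ⟨L, hHL⟩ := hH
  obtain ⟨L', hKL'⟩ := hK
  exact (comaximalGraph.reachable_of_adj_of_isCoatom (M := Mv) hMcoatom hHL).trans
    (comaximalGraph.reachable_of_adj_of_isCoatom (M := Mv) hMcoatom hKL').symm

/-- If a finite group `G` has a maximal subgroup which is normal, then any two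
non-isolated vertices of `Γ(G)` lie in the same connected component. -/
theorem comaximal_reachable_of_normal_maximal {G : Type*} [Group G] [Finite G]
    (hM : ∃ M : Subgroup G, IsCoatom M ∧ M.Normal)
    (H K : {H : Subgroup G // H ≠ ⊥ ∧ H ≠ ⊤})
    (hH : ∃ L, (comaximalGraph G).Adj H L)
    (hK : ∃ L, (comaximalGraph G).Adj K L) :
    (comaximalGraph G).Reachable H K :=
  comaximal_reachable_of_normal_maximal_general hM H K hH hK
end

section
/- Let G be a finite nilpotent group. Then any two distinct non-isolated vertices H and K of Γ(G) are joined in Γ(G) by a path of length at most 3. -/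
open scoped Pointwise

/-!
Every non-isolated vertex `H` is adjacent to a maximal subgroup: if `HL = G`, then `HM = G` for
any maximal `M ≥ L`. In a finite nilpotent group maximal subgroups are normal, so two distinct
maximal subgroups `M, N` satisfy `MN = M ⊔ N = G`. Hence `H - M - N - K` (or `H - M - K` when
`M = N`) is a walk of length at most `3`, which can be shortened to a path.
-/

theorem SimpleGraph.Walk.exists_isPath_length_le {V : Type*} [DecidableEq V] {Γ : SimpleGraph V}
    {u v : V} (p : Γ.Walk u v) : ∃ q : Γ.Walk u v, q.IsPath ∧ q.length ≤ p.length :=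
  ⟨p.bypass, p.bypass_isPath, p.length_bypass_le_length⟩

namespace comaximalGraph

variable {G : Type*} [Group G] {H K L : {H : Subgroup G // H ≠ ⊥ ∧ H ≠ ⊤}}

theorem adj_of_adj_of_le (h : (comaximalGraph G).Adj H K) (hKL : K.1 ≤ L.1) :
    (comaximalGraph G).Adj H L := by
  have hHL : (H.1 : Set G) * (L.1 : Set G) = Set.univ :=
    Set.eq_univ_of_univ_subset (h.2 ▸ Set.mul_subset_mul_left (SetLike.coe_subset_coe.mpr hKL))
  refine ⟨?_, hHL⟩
  rintro rfl
  rw [coe_mul_coe, ← Subgroup.coe_top, SetLike.coe_set_eq] at hHL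
  exact H.2.2 hHL

theorem exists_adj_isCoatom [IsCoatomic (Subgroup G)] (h : ∃ L, (comaximalGraph G).Adj H L) :
    ∃ M, IsCoatom M.1 ∧ (comaximalGraph G).Adj H M := by
  obtain ⟨L, hL⟩ := h
  obtain ⟨M, hM, hLM⟩ := (eq_top_or_exists_le_coatom L.1).resolve_left L.2.2
  have hM_ne_bot : M ≠ ⊥ := fun hbot => L.2.1 (le_bot_iff.mp (hbot ▸ hLM))
  exact ⟨⟨M, hM_ne_bot, hM.1⟩, hM, adj_of_adj_of_le (L := ⟨M, hM_ne_bot, hM.1⟩) hL hLM⟩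

theorem adj_of_isCoatom (hH : IsCoatom H.1) (hK : IsCoatom K.1) [K.1.Normal] (hne : H ≠ K) :
    (comaximalGraph G).Adj H K := by
  refine ⟨hne, ?_⟩
  rw [← Subgroup.mul_normal, hH.sup_eq_top_of_ne hK (Subtype.coe_ne_coe.mpr hne)]
  rfl

end comaximalGraph

open comaximalGraph SimpleGraph in
theorem comaximal_path_length_le_three_of_nilpotent_general {G : Type*} [Group G] [Finite G]
    [Group.IsNilpotent G]
    (H K : {H : Subgroup G // H ≠ ⊥ ∧ H ≠ ⊤})
    (hH : ∃ L, (comaximalGraph G).Adj H L)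
    (hK : ∃ L, (comaximalGraph G).Adj K L) :
    ∃ p : (comaximalGraph G).Walk H K, p.IsPath ∧ p.length ≤ 3 := by
  classical
  obtain ⟨M, hM, hHM⟩ := exists_adj_isCoatom hH
  obtain ⟨N, hN, hKN⟩ := exists_adj_isCoatom hK
  have : N.1.Normal :=
    Subgroup.NormalizerCondition.normal_of_coatom N.1 Group.normalizerCondition_of_isNilpotent hN
  obtain ⟨q, hq⟩ : ∃ q : (comaximalGraph G).Walk M N, q.length ≤ 1 := by
    by_cases hMN : M = N
    · subst hMN
      exact ⟨.nil, by simp⟩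
    · exact ⟨(adj_of_isCoatom hM hN hMN).toWalk, by simp⟩
  obtain ⟨p, hp, hlen⟩ := (Walk.cons hHM (q.append hKN.symm.toWalk)).exists_isPath_length_le
  refine ⟨p, hp, hlen.trans ?_⟩
  simp only [Walk.length_cons, Walk.length_append, Adj.toWalk, Walk.length_nil]
  omega

/-- In a finite nilpotent group, any two distinct non-isolated vertices of
`Γ(G)` are joined by a path of length at most `3`. -/
theorem comaximal_path_length_le_three_of_nilpotent {G : Type*} [Group G] [Finite G]
    [Group.IsNilpotent G]
    (H K : {H : Subgroup G // H ≠ ⊥ ∧ H ≠ ⊤}) (hne : H ≠ K)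
    (hH : ∃ L, (comaximalGraph G).Adj H L)
    (hK : ∃ L, (comaximalGraph G).Adj K L) :
    ∃ p : (comaximalGraph G).Walk H K, p.IsPath ∧ p.length ≤ 3 :=
  comaximal_path_length_le_three_of_nilpotent_general H K hH hK
end

section
/- Let G be a finite group having at least two non-trivial proper subgroups. Then Γ(G) is a complete graph — i.e., every two distinct non-trivial proper subgroups H and K of G satisfy HK = G — if and only if there exist primes p and q (not necessarily distinct) such that G is isomorphic to Z_p × Z_q. -/
open scoped Pointwise

private lemma subgroup_eq_of_le_of_card_le' {G : Type*} [Group G] [Finite G]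
    {H K : Subgroup G} (h : H ≤ K) (hc : Nat.card K ≤ Nat.card H) : H = K :=
  SetLike.coe_injective <| Set.eq_of_subset_of_ncard_le h
    (by rwa [← Nat.card_coe_set_eq, ← Nat.card_coe_set_eq]) (Set.toFinite _)

/-- For a finite group `G` with at least two non-trivial proper subgroups,
`Γ(G)` is complete iff `G ≅ Z_p × Z_q` for primes `p`, `q`. -/
theorem comaximal_complete_iff {G : Type*} [Group G] [Finite G]
    (h2 : ∃ H K : Subgroup G, H ≠ K ∧ H ≠ ⊥ ∧ H ≠ ⊤ ∧ K ≠ ⊥ ∧ K ≠ ⊤) :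
    (∀ H K : Subgroup G, H ≠ ⊥ → H ≠ ⊤ → K ≠ ⊥ → K ≠ ⊤ → H ≠ K →
        (H : Set G) * (K : Set G) = Set.univ) ↔
      ∃ p q : ℕ, p.Prime ∧ q.Prime ∧
        Nonempty (G ≃* Multiplicative (ZMod p × ZMod q)) := by
  constructor
  · intro hc
    obtain ⟨H0, K0, hne, hH0b, hH0t, hK0b, hK0t⟩ := h2
    -- every nontrivial proper subgroup is an atom
    have hatom : ∀ H : Subgroup G, H ≠ ⊥ → H ≠ ⊤ → ∀ A : Subgroup G, A ≤ H →
        A = ⊥ ∨ A = H := by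
      intro H hb ht A hA
      by_contra hcon
      push_neg at hcon
      have hAt : A ≠ ⊤ := by
        rintro rfl
        exact ht (top_le_iff.mp hA)
      have hmul := hc A H hcon.1 hAt hb ht hcon.2
      have hsub : (A : Set G) * (H : Set G) ⊆ (H : Set G) := by
        rintro x ⟨a, ha, b, hb', rfl⟩
        exact mul_mem (hA ha) hb'
      rw [hmul] at hsub
      exact ht (top_le_iff.mp fun x _ => hsub (Set.mem_univ x))
    -- every nontrivial proper subgroup has prime order
    have hprime : ∀ H : Subgroup G, H ≠ ⊥ → H ≠ ⊤ → (Nat.card H).Prime := by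
      intro H hb ht
      have h1 : 1 < Nat.card H := (Subgroup.one_lt_card_iff_ne_bot _).mpr hb
      have hrp : (Nat.card H).minFac.Prime := Nat.minFac_prime (by omega)
      haveI : Fact (Nat.card H).minFac.Prime := ⟨hrp⟩
      obtain ⟨x, hx⟩ := exists_prime_orderOf_dvd_card' (G := H) _ (Nat.minFac_dvd _)
      have hxne : (x : G) ≠ 1 := by
        intro hx1
        have : x = 1 := Subtype.ext hx1
        rw [this, orderOf_one] at hx
        exact hrp.one_lt.ne' hx.symm
      have hord : orderOf (x : G) = (Nat.card H).minFac := by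
        rw [← hx]
        exact orderOf_injective H.subtype H.subtype_injective x
      have hzle : Subgroup.zpowers (x : G) ≤ H := Subgroup.zpowers_le.mpr x.2
      have hzb : Subgroup.zpowers (x : G) ≠ ⊥ := by
        rw [Ne, Subgroup.zpowers_eq_bot]
        exact hxne
      rcases hatom H hb ht _ hzle with h | h
      · exact absurd h hzb
      · rw [← h, Nat.card_zpowers, hord]
        exact hrp
    -- disjointness of distinct nontrivial proper subgroups
    have hdisj : ∀ H K : Subgroup G, H ≠ ⊥ → H ≠ ⊤ → K ≠ ⊥ → K ≠ ⊤ → H ≠ K →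
        Disjoint H K := by
      intro H K hb ht kb kt hnk
      rw [disjoint_iff]
      rcases hatom H hb ht (H ⊓ K) inf_le_left with h | h
      · exact h
      · have hle : H ≤ K := by
          rw [← h]; exact inf_le_right
        rcases hatom K kb kt H hle with h2 | h2
        · exact absurd h2 hb
        · exact absurd h2 hnk
    have hd0 := hdisj H0 K0 hH0b hH0t hK0b hK0t hne
    have hcompl := Subgroup.isComplement'_of_disjoint_and_mul_eq_univ hd0
      (hc H0 K0 hH0b hH0t hK0b hK0t hne)
    have hcard : Nat.card H0 * Nat.card K0 = Nat.card G := hcompl.card_mul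
    have hp := hprime H0 hH0b hH0t
    have hq := hprime K0 hK0b hK0t
    haveI := Fact.mk hp
    haveI := Fact.mk hq
    have hnormal : H0.Normal ∧ K0.Normal := by
      by_cases hpq : Nat.card H0 = Nat.card K0
      · -- order p², commutative
        have hG2 : Nat.card G = (Nat.card H0) ^ 2 := by
          rw [← hcard, hpq, sq]
        have hcomm := IsPGroup.commutative_of_card_eq_prime_sq hG2
        constructor <;>
          exact ⟨fun n hn g => by
            rw [hcomm g n, mul_assoc, mul_inv_cancel, mul_one]; exact hn⟩
      · -- distinct prime orders: normality by conjugation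
        have keynorm : ∀ H : Subgroup G, H ≠ ⊥ → H ≠ ⊤ →
            Nat.card H * Nat.card H ≠ Nat.card G → H.Normal := by
          intro H hb ht hcsq
          constructor
          intro n hn g
          by_contra hg
          set H1 := H.map (MulAut.conj g).toMonoidHom with hH1
          have hcard1 : Nat.card H1 = Nat.card H :=
            Nat.card_congr (Subgroup.equivMapOfInjective H _
              (MulAut.conj g).injective).toEquiv.symm
          have hmem : g * n * g⁻¹ ∈ H1 := ⟨n, hn, rfl⟩
          have hne1 : H ≠ H1 := fun h => hg (h ▸ hmem)
          have h1b : H1 ≠ ⊥ := by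
            rw [← Subgroup.one_lt_card_iff_ne_bot _, hcard1]
            exact (Subgroup.one_lt_card_iff_ne_bot _).mpr hb
          have h1t : H1 ≠ ⊤ := by
            intro h
            apply ht
            apply (Subgroup.card_eq_iff_eq_top _).mp
            rw [← hcard1, h, Subgroup.card_top]
          have hd := hdisj H H1 hb ht h1b h1t hne1
          have hc2 := Subgroup.isComplement'_of_disjoint_and_mul_eq_univ hd
            (hc H H1 hb ht h1b h1t hne1)
          have hcm := hc2.card_mul
          rw [hcard1] at hcm
          exact hcsq hcm
        have hH0sq : Nat.card H0 * Nat.card H0 ≠ Nat.card G := by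
          rw [← hcard]
          intro h
          exact hpq (Nat.eq_of_mul_eq_mul_left hp.pos h)
        have hK0sq : Nat.card K0 * Nat.card K0 ≠ Nat.card G := by
          rw [← hcard]
          intro h
          exact hpq (Nat.eq_of_mul_eq_mul_right hq.pos h).symm
        exact ⟨keynorm H0 hH0b hH0t hH0sq, keynorm K0 hK0b hK0t hK0sq⟩
    obtain ⟨hn1, hn2⟩ := hnormal
    have hcomm := Subgroup.commute_of_normal_of_disjoint H0 K0 hn1 hn2 hd0
    let f : ↥H0 × ↥K0 →* G :=
      (H0.subtype).noncommCoprod (K0.subtype) (fun m n => hcomm m n m.2 n.2)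
    have hbij : Function.Bijective f := hcompl
    have hcy1 : IsCyclic ↥H0 := isCyclic_of_prime_card (p := Nat.card H0) rfl
    have hcy2 : IsCyclic ↥K0 := isCyclic_of_prime_card (p := Nat.card K0) rfl
    refine ⟨Nat.card H0, Nat.card K0, hp, hq, ⟨?_⟩⟩
    exact (MulEquiv.ofBijective f hbij).symm.trans
      (((zmodCyclicMulEquiv hcy1).symm.prodCongr (zmodCyclicMulEquiv hcy2).symm).trans
        (MulEquiv.prodMultiplicative _ _).symm)
  · rintro ⟨p, q, hp, hq, ⟨e⟩⟩
    intro H K hHb hHt hKb hKt hne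
    have hmulcomm : ∀ a b : G, a * b = b * a := fun a b =>
      e.injective (by rw [map_mul, map_mul, mul_comm])
    have hnorm : ∀ L : Subgroup G, L.Normal := fun L =>
      ⟨fun n hn g => by rw [hmulcomm g n, mul_assoc, mul_inv_cancel, mul_one]; exact hn⟩
    haveI := hnorm K
    have hcardG : Nat.card G = p * q := by
      rw [Nat.card_congr e.toEquiv, Nat.card_congr Multiplicative.toAdd, Nat.card_prod,
        Nat.card_zmod, Nat.card_zmod]
    have hdvd : ∀ L : Subgroup G, Nat.card L ∣ p * q := fun L =>
      hcardG ▸ Subgroup.card_subgroup_dvd_card L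
    have hdivisor : ∀ n : ℕ, n ∣ p * q → n = 1 ∨ n = p ∨ n = q ∨ n = p * q := by
      intro n hn
      rw [Nat.dvd_mul] at hn
      obtain ⟨a, b, ha, hb, rfl⟩ := hn
      rcases (Nat.Prime.eq_one_or_self_of_dvd hp a ha) with rfl | rfl <;>
        rcases (Nat.Prime.eq_one_or_self_of_dvd hq b hb) with rfl | rfl <;> simp
    have hsup : H ⊔ K = ⊤ := by
      by_contra hst
      have hM1 : Nat.card (H ⊔ K : Subgroup G) ≠ 1 := by
        intro h
        apply hHb
        exact le_bot_iff.mp (((Subgroup.eq_bot_iff_card _).mpr h) ▸ le_sup_left)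
      have hMpq : Nat.card (H ⊔ K : Subgroup G) ≠ p * q := by
        intro h
        exact hst ((Subgroup.card_eq_iff_eq_top _).mp (by rw [h, hcardG]))
      have hMprime : (Nat.card (H ⊔ K : Subgroup G)).Prime := by
        rcases hdivisor _ (hdvd (H ⊔ K)) with h | h | h | h
        · exact absurd h hM1
        · rw [h]; exact hp
        · rw [h]; exact hq
        · exact absurd h hMpq
      have key : ∀ L : Subgroup G, L ≠ ⊥ → L ≤ H ⊔ K → L = H ⊔ K := by
        intro L hLb hle
        apply subgroup_eq_of_le_of_card_le' hle
        rcases (Nat.Prime.eq_one_or_self_of_dvd hMprime _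
            (Subgroup.card_dvd_of_le hle)) with h | h
        · exact absurd ((Subgroup.eq_bot_iff_card _).mpr h) hLb
        · exact le_of_eq h.symm
      exact hne ((key H hHb le_sup_left).trans (key K hKb le_sup_right).symm)
    rw [← Subgroup.mul_normal H K, hsup, Subgroup.coe_top]
end

section
/- Let G be a finite group. Then Γ(G) is a star graph — i.e., there exists a non-trivial proper subgroup H of G such that HK = G for every non-trivial proper subgroup K ≠ H, no two distinct non-trivial proper subgroups K₁, K₂ both different from H satisfy K₁K₂ = G, and G has at least one non-trivial proper subgroup other than H — if and only if the order of G equals pq for some pair of distinct primes p and q. -/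
open scoped Pointwise

section Aux

variable {G : Type*} [Group G]

private lemma aux_mul_subset_right {A B : Subgroup G} (h : A ≤ B) :
    (A : Set G) * (B : Set G) ⊆ (B : Set G) := by
  rintro x ⟨a, ha, b, hb, rfl⟩
  exact B.mul_mem (h ha) hb

private lemma aux_mul_subset_left {A B : Subgroup G} (h : B ≤ A) :
    (A : Set G) * (B : Set G) ⊆ (A : Set G) := by
  rintro x ⟨a, ha, b, hb, rfl⟩
  exact A.mul_mem ha (h hb)

private lemma aux_eq_top_right {A B : Subgroup G} (h : A ≤ B)
    (hu : (A : Set G) * (B : Set G) = Set.univ) : B = ⊤ := by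
  rw [Subgroup.eq_top_iff']
  intro x
  exact aux_mul_subset_right h (hu ▸ Set.mem_univ x)

private lemma aux_eq_top_left {A B : Subgroup G} (h : B ≤ A)
    (hu : (A : Set G) * (B : Set G) = Set.univ) : A = ⊤ := by
  rw [Subgroup.eq_top_iff']
  intro x
  exact aux_mul_subset_left h (hu ▸ Set.mem_univ x)

private lemma aux_prime_min [Finite G] {A : Subgroup G} (hA : (Nat.card A).Prime)
    {N : Subgroup G} (hle : N ≤ A) : N = ⊥ ∨ N = A := by
  rcases hA.eq_one_or_self_of_dvd _ (Subgroup.card_dvd_of_le hle) with h | h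
  · exact Or.inl (Subgroup.card_eq_one.mp h)
  · exact Or.inr (Subgroup.eq_of_le_of_card_ge hle h.ge)

private lemma aux_disjoint [Finite G] {A B : Subgroup G} (hA : (Nat.card A).Prime)
    (h : ¬A ≤ B) : Disjoint A B := by
  rw [disjoint_iff]
  rcases aux_prime_min hA (inf_le_left : A ⊓ B ≤ A) with h' | h'
  · exact h'
  · exact absurd (h' ▸ inf_le_right) h

private lemma aux_min_prime_card [Finite G] {H : Subgroup G} (hb : H ≠ ⊥)
    (hmin : ∀ N : Subgroup G, N ≤ H → N ≠ ⊥ → N = H) : (Nat.card H).Prime := by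
  have h1 : Nat.card H ≠ 1 := fun h => hb (Subgroup.card_eq_one.mp h)
  obtain ⟨p, hp, hpd⟩ := Nat.exists_prime_and_dvd h1
  haveI : Fact p.Prime := ⟨hp⟩
  obtain ⟨x, hx⟩ := exists_prime_orderOf_dvd_card' (G := H) p hpd
  have horder : orderOf (x : G) = p := (Subgroup.orderOf_coe x).trans hx
  have hne : (x : G) ≠ 1 := by
    intro h
    rw [h, orderOf_one] at horder
    exact hp.ne_one horder.symm
  have hZle : Subgroup.zpowers (x : G) ≤ H := (Subgroup.zpowers_le).mpr x.2
  have hZb : Subgroup.zpowers (x : G) ≠ ⊥ := by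
    simpa [Subgroup.zpowers_eq_bot] using hne
  have := hmin _ hZle hZb
  rw [← this, Nat.card_zpowers, horder]
  exact hp

private lemma aux_card_mul_le [Finite G] {A B : Subgroup G} (h : Disjoint A B) :
    Nat.card A * Nat.card B ≤ Nat.card G := by
  have hinj := Subgroup.mul_injective_of_disjoint h
  have := Nat.card_le_card_of_injective _ hinj
  rwa [Nat.card_prod] at this

private lemma aux_dvd_prime_mul {p q d : ℕ} (hp : p.Prime) (hq : q.Prime)
    (h : d ∣ p * q) : d = 1 ∨ d = p ∨ d = q ∨ d = p * q := by
  by_cases hpd : p ∣ d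
  · obtain ⟨e, rfl⟩ := hpd
    have he : e ∣ q := (mul_dvd_mul_iff_left hp.pos.ne').mp h
    rcases hq.eq_one_or_self_of_dvd _ he with rfl | rfl
    · exact Or.inr (Or.inl (mul_one p))
    · exact Or.inr (Or.inr (Or.inr rfl))
  · have hc : Nat.Coprime d p := ((Nat.Prime.coprime_iff_not_dvd hp).mpr hpd).symm
    have hd : d ∣ q := hc.dvd_of_dvd_mul_left h
    rcases hq.eq_one_or_self_of_dvd _ hd with rfl | rfl
    · exact Or.inl rfl
    · exact Or.inr (Or.inr (Or.inl rfl))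

/-- The backwards direction of the star characterisation, assuming `p < q`. -/
private lemma aux_converse {G : Type*} [Group G] [Finite G] {p q : ℕ}
    (hp : p.Prime) (hq : q.Prime) (hlt : p < q) (hG : Nat.card G = p * q) :
    (∃ H : Subgroup G, H ≠ ⊥ ∧ H ≠ ⊤ ∧
      (∀ K : Subgroup G, K ≠ ⊥ → K ≠ ⊤ → K ≠ H →
        (H : Set G) * (K : Set G) = Set.univ) ∧
      (∀ K₁ K₂ : Subgroup G, K₁ ≠ ⊥ → K₁ ≠ ⊤ → K₂ ≠ ⊥ → K₂ ≠ ⊤ →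
        K₁ ≠ H → K₂ ≠ H → K₁ ≠ K₂ → (K₁ : Set G) * (K₂ : Set G) ≠ Set.univ) ∧
      (∃ K : Subgroup G, K ≠ ⊥ ∧ K ≠ ⊤ ∧ K ≠ H)) := by
  haveI : Fact p.Prime := ⟨hp⟩
  haveI : Fact q.Prime := ⟨hq⟩
  obtain ⟨Q, hQ⟩ := Sylow.exists_subgroup_card_pow_prime (G := G) q (n := 1)
    (by rw [pow_one, hG]; exact dvd_mul_left q p)
  obtain ⟨P, hP⟩ := Sylow.exists_subgroup_card_pow_prime (G := G) p (n := 1)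
    (by rw [pow_one, hG]; exact dvd_mul_right p q)
  rw [pow_one] at hQ hP
  have hq2 : 2 ≤ q := hq.two_le
  have hp2 : 2 ≤ p := hp.two_le
  have hqlt : q < p * q := by nlinarith
  have hplt : p < p * q := by nlinarith
  -- classification of the cards of vertices other than `Q`
  have classify : ∀ K : Subgroup G, K ≠ ⊥ → K ≠ ⊤ → K ≠ Q → Nat.card K = p := by
    intro K hKb hKt hKQ
    have hdvd : Nat.card K ∣ p * q := hG ▸ Subgroup.card_subgroup_dvd_card K
    have h1 : Nat.card K ≠ 1 := fun h => hKb (Subgroup.card_eq_one.mp h)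
    have hpq' : Nat.card K ≠ p * q := by
      intro h
      exact hKt (Subgroup.eq_of_le_of_card_ge le_top
        (by rw [Subgroup.card_top, hG, h]))
    have hnq : Nat.card K ≠ q := by
      intro h
      have hKneQ : ¬K ≤ Q := by
        intro hle
        exact hKQ (Subgroup.eq_of_le_of_card_ge hle (by rw [hQ, h]))
      have hdisj : Disjoint K Q := aux_disjoint (by rw [h]; exact hq) hKneQ
      have := aux_card_mul_le hdisj
      rw [h, hQ, hG] at this
      have hqp : q ≤ p := Nat.le_of_mul_le_mul_right this hq.pos
      omega
    rcases aux_dvd_prime_mul hp hq hdvd with h | h | h | h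
    · exact absurd h h1
    · exact h
    · exact absurd h hnq
    · exact absurd h hpq'
  refine ⟨Q, ?_, ?_, ?_, ?_, ?_⟩
  · intro h
    rw [h, Subgroup.card_bot] at hQ
    omega
  · intro h
    rw [h, Subgroup.card_top, hG] at hQ
    omega
  · intro K hKb hKt hKQ
    have hKp := classify K hKb hKt hKQ
    have hcomp : Subgroup.IsComplement' Q K :=
      Subgroup.isComplement'_of_coprime
        (by rw [hQ, hKp, hG, mul_comm])
        (by rw [hQ, hKp]; exact (Nat.coprime_primes hq hp).mpr hlt.ne')
    exact (Subgroup.isComplement'_def.mp hcomp).mul_eq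
  · intro K₁ K₂ h1b h1t h2b h2t h1Q h2Q hne huniv
    have hc1 := classify K₁ h1b h1t h1Q
    have hc2 := classify K₂ h2b h2t h2Q
    have hdisj : Disjoint K₁ K₂ := by
      refine aux_disjoint (by rw [hc1]; exact hp) ?_
      intro hle
      exact hne (Subgroup.eq_of_le_of_card_ge hle (by rw [hc1, hc2]))
    have hcomp := Subgroup.isComplement'_of_disjoint_and_mul_eq_univ hdisj huniv
    have := hcomp.card_mul
    rw [hc1, hc2, hG] at this
    have : p = q := Nat.eq_of_mul_eq_mul_left hp.pos this
    exact hlt.ne this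
  · refine ⟨P, ?_, ?_, ?_⟩
    · intro h
      rw [h, Subgroup.card_bot] at hP
      omega
    · intro h
      rw [h, Subgroup.card_top, hG] at hP
      omega
    · intro h
      rw [h, hQ] at hP
      omega

end Aux

/-- For a finite group `G`, `Γ(G)` is a star graph iff `|G| = pq` for distinct
primes `p`, `q`. -/
theorem comaximal_star_iff {G : Type*} [Group G] [Finite G] :
    (∃ H : Subgroup G, H ≠ ⊥ ∧ H ≠ ⊤ ∧
      (∀ K : Subgroup G, K ≠ ⊥ → K ≠ ⊤ → K ≠ H →
        (H : Set G) * (K : Set G) = Set.univ) ∧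
      (∀ K₁ K₂ : Subgroup G, K₁ ≠ ⊥ → K₁ ≠ ⊤ → K₂ ≠ ⊥ → K₂ ≠ ⊤ →
        K₁ ≠ H → K₂ ≠ H → K₁ ≠ K₂ → (K₁ : Set G) * (K₂ : Set G) ≠ Set.univ) ∧
      (∃ K : Subgroup G, K ≠ ⊥ ∧ K ≠ ⊤ ∧ K ≠ H)) ↔
    ∃ p q : ℕ, p.Prime ∧ q.Prime ∧ p ≠ q ∧ Nat.card G = p * q := by
  constructor
  · rintro ⟨H, hHb, hHt, hstar, hnone, K0, hK0b, hK0t, hK0H⟩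
    -- `H` is a minimal subgroup
    have hHmin : ∀ N : Subgroup G, N ≤ H → N ≠ ⊥ → N = H := by
      intro N hle hNb
      by_contra hne
      have hNt : N ≠ ⊤ := fun h => hHt (top_le_iff.mp (h ▸ hle))
      have hmul := hstar N hNb hNt hne
      exact hHt (aux_eq_top_left hle hmul)
    set p := Nat.card H with hpdef
    have hp : p.Prime := aux_min_prime_card hHb hHmin
    -- for every vertex `K ≠ H`, `H` and `K` are disjoint complements
    have hdisjH : ∀ K : Subgroup G, K ≠ ⊥ → K ≠ ⊤ → K ≠ H → Disjoint H K := by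
      intro K hb ht hne
      refine aux_disjoint hp ?_
      intro hle
      exact ht (aux_eq_top_right hle (hstar K hb ht hne))
    have hvert : ∀ K : Subgroup G, K ≠ ⊥ → K ≠ ⊤ → K ≠ H →
        p * Nat.card K = Nat.card G := by
      intro K hb ht hne
      exact (Subgroup.isComplement'_of_disjoint_and_mul_eq_univ
        (hdisjH K hb ht hne) (hstar K hb ht hne)).card_mul
    -- `K0` is a minimal subgroup
    have hK0min : ∀ N : Subgroup G, N ≤ K0 → N ≠ ⊥ → N = K0 := by
      intro N hle hNb
      have hNt : N ≠ ⊤ := fun h => hK0t (top_le_iff.mp (h ▸ hle))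
      by_cases hNH : N = H
      · exfalso
        subst hNH
        exact hK0t (aux_eq_top_right hle (hstar K0 hK0b hK0t hK0H))
      · have e1 := hvert N hNb hNt hNH
        have e2 := hvert K0 hK0b hK0t hK0H
        have : Nat.card N = Nat.card K0 :=
          Nat.eq_of_mul_eq_mul_left hp.pos (e1.trans e2.symm)
        exact Subgroup.eq_of_le_of_card_ge hle this.ge
    set q := Nat.card K0 with hqdef
    have hq : q.Prime := aux_min_prime_card hK0b hK0min
    have hGcard : Nat.card G = p * q := (hvert K0 hK0b hK0t hK0H).symm
    rcases eq_or_ne p q with heq | hne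
    · -- impossible case `p = q`
      exfalso
      have hGc : Nat.card G = p * p := by rw [hGcard, heq]
      have hK0p : Nat.card K0 = p := heq.symm
      -- find an element outside `H ∪ K0`
      have hexists : ∃ g : G, g ∉ ((H : Set G) ∪ (K0 : Set G)) := by
        by_contra hcon
        push_neg at hcon
        have huniv : ((H : Set G) ∪ (K0 : Set G)) = Set.univ :=
          Set.eq_univ_of_forall hcon
        have h1 := Set.ncard_union_add_ncard_inter (H : Set G) (K0 : Set G)
        rw [huniv, Set.ncard_univ] at h1
        have hHn : (H : Set G).ncard = p := by
          rw [← Nat.card_coe_set_eq]; rfl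
        have hKn : (K0 : Set G).ncard = p := by
          rw [← Nat.card_coe_set_eq]; exact hK0p
        have hint : 0 < ((H : Set G) ∩ (K0 : Set G)).ncard := by
          rw [Set.ncard_pos (Set.toFinite _)]
          exact ⟨1, H.one_mem, K0.one_mem⟩
        rw [hHn, hKn, hGc] at h1
        nlinarith [hp.two_le]
      obtain ⟨g, hg⟩ := hexists
      have hgH : g ∉ H := fun h => hg (Or.inl h)
      have hgK : g ∉ K0 := fun h => hg (Or.inr h)
      have hg1 : g ≠ 1 := fun h => hgH (h ▸ H.one_mem)
      have hodvd : orderOf g ∣ p ^ 2 := by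
        rw [← Nat.card_zpowers]
        have := Subgroup.card_subgroup_dvd_card (Subgroup.zpowers g)
        rwa [hGc, ← pow_two] at this
      obtain ⟨i, hi, hoi⟩ := (Nat.dvd_prime_pow hp).mp hodvd
      interval_cases i
      · exact hg1 (orderOf_eq_one_iff.mp (by rwa [pow_zero] at hoi))
      · -- `g` has order `p`: a third vertex, contradiction with `hnone`
        rw [pow_one] at hoi
        set Z := Subgroup.zpowers g with hZdef
        have hZcard : Nat.card Z = p := by rw [hZdef, Nat.card_zpowers, hoi]
        have hZb : Z ≠ ⊥ := by simpa [hZdef, Subgroup.zpowers_eq_bot] using hg1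
        have hZt : Z ≠ ⊤ := by
          intro h
          rw [h, Subgroup.card_top, hGc] at hZcard
          nlinarith [hp.two_le]
        have hZH : Z ≠ H := fun h => hgH (h ▸ Subgroup.mem_zpowers g)
        have hZK : Z ≠ K0 := fun h => hgK (h ▸ Subgroup.mem_zpowers g)
        have hdisj : Disjoint K0 Z := by
          refine aux_disjoint (by rw [hK0p]; exact hp) ?_
          intro hle
          exact hZK (Subgroup.eq_of_le_of_card_ge hle
            (by rw [hK0p, hZcard])).symm
        have hcomp := Subgroup.isComplement'_of_card_mul_and_disjoint
          (by rw [hK0p, hZcard, hGc]) hdisj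
        exact hnone K0 Z hK0b hK0t hZb hZt hK0H hZH (Ne.symm hZK)
          (Subgroup.isComplement'_def.mp hcomp).mul_eq
      · -- `g` generates `G`, which is cyclic of order `p ^ 2`
        have hztop : Subgroup.zpowers g = ⊤ := by
          refine Subgroup.eq_of_le_of_card_ge le_top ?_
          rw [Subgroup.card_top, Nat.card_zpowers, hoi, hGc, pow_two]
        set P := Subgroup.zpowers (g ^ p) with hPdef
        have hordgp : orderOf (g ^ p) = p := by
          rw [orderOf_pow, hoi, pow_two, Nat.gcd_comm,
            Nat.gcd_eq_left (dvd_mul_right p p), Nat.mul_div_cancel_left p hp.pos]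
        have hsub : ∀ A : Subgroup G, Nat.card A = p → A ≤ P := by
          intro A hA a ha
          have hm : a ∈ Subgroup.zpowers g := by rw [hztop]; exact Subgroup.mem_top a
          obtain ⟨k, hk⟩ := Subgroup.mem_zpowers_iff.mp hm
          have hord : orderOf a ∣ p := hA ▸ Subgroup.orderOf_dvd_natCard A ha
          have hap : a ^ p = 1 := orderOf_dvd_iff_pow_eq_one.mp hord
          have hzp : g ^ (k * (p : ℤ)) = 1 := by
            rw [zpow_mul, hk, zpow_natCast]; exact hap
          have hdvd2 : ((orderOf g : ℤ)) ∣ k * (p : ℤ) :=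
            orderOf_dvd_iff_zpow_eq_one.mpr hzp
          rw [hoi] at hdvd2
          push_cast at hdvd2
          obtain ⟨t, ht⟩ := hdvd2
          have hp0 : (p : ℤ) ≠ 0 := by exact_mod_cast hp.pos.ne'
          have hk2 : k = (p : ℤ) * t := by
            apply mul_right_cancel₀ hp0
            rw [ht]; ring
          rw [← hk, hk2, zpow_mul, zpow_natCast]
          exact Subgroup.zpow_mem P (Subgroup.mem_zpowers _) t
        have hPb : P ≠ ⊥ := by
          intro h
          have : g ^ p = 1 := Subgroup.zpowers_eq_bot.mp h
          rw [orderOf_eq_one_iff.mpr this] at hordgp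
          exact hp.ne_one hordgp.symm
        have hPt : P ≠ ⊤ := by
          intro h
          have : Nat.card P = Nat.card G := by rw [h, Subgroup.card_top]
          rw [hPdef, Nat.card_zpowers, hordgp, hGc] at this
          nlinarith [hp.two_le]
        have hHP : H ≤ P := hsub H rfl
        have hPH : P = H := by
          by_contra hPH
          exact hPt (aux_eq_top_right hHP (hstar P hPb hPt hPH))
        have hK0H' : K0 ≤ H := hPH ▸ hsub K0 hK0p
        exact hHt (aux_eq_top_left hK0H' (hstar K0 hK0b hK0t hK0H))
    · exact ⟨p, q, hp, hq, hne, hGcard⟩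
  · rintro ⟨p, q, hp, hq, hne, hG⟩
    rcases lt_or_gt_of_ne hne with hlt | hlt
    · exact aux_converse hp hq hlt hG
    · exact aux_converse hq hp hlt (by rw [hG, mul_comm])
end

section
/- Let G be a finite group. Then Γ(G) has a universal vertex — i.e., there exists a non-trivial proper subgroup H of G such that HK = G for every non-trivial proper subgroup K ≠ H, and G has at least one non-trivial proper subgroup other than H — if and only if either G is isomorphic to Z_p × Z_p for some prime p, or the order of G equals pq for some pair of distinct primes p and q. -/
open scoped Pointwise
open Subgroup

section Helpers
variable {G : Type*} [Group G]

lemma cmx_mul_inj {H K : Subgroup G} (h : H ⊓ K = ⊥) :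
    Function.Injective (fun x : H × K => (x.1 : G) * x.2) := by
  rintro ⟨⟨h1, hh1⟩, ⟨k1, hk1⟩⟩ ⟨⟨h2, hh2⟩, ⟨k2, hk2⟩⟩ heq
  simp only [Prod.mk.injEq, Subtype.mk.injEq] at heq ⊢
  have e : h2⁻¹ * h1 = k2 * k1⁻¹ := by
    calc h2⁻¹ * h1 = h2⁻¹ * (h1 * k1) * k1⁻¹ := by group
      _ = h2⁻¹ * (h2 * k2) * k1⁻¹ := by rw [heq]
      _ = k2 * k1⁻¹ := by group
  have hmem : h2⁻¹ * h1 ∈ H ⊓ K := by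
    refine ⟨H.mul_mem (H.inv_mem hh2) hh1, ?_⟩
    rw [e]; exact K.mul_mem hk2 (K.inv_mem hk1)
  rw [h, Subgroup.mem_bot] at hmem
  have h12 : h1 = h2 := by
    have := hmem
    rw [inv_mul_eq_one] at this
    exact this.symm
  refine ⟨h12.symm ▸ rfl, ?_⟩
  · subst h12
    exact mul_left_cancel heq

lemma cmx_card_mul {H K : Subgroup G} (h : H ⊓ K = ⊥) :
    Nat.card (↑H * ↑K : Set G) = Nat.card H * Nat.card K := by
  have hbij : Function.Bijective
      (fun x : H × K => (⟨(x.1 : G) * x.2, Set.mul_mem_mul x.1.2 x.2.2⟩ :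
        (↑H * ↑K : Set G))) := by
    constructor
    · intro a b hab
      exact cmx_mul_inj h (by simpa [Subtype.ext_iff] using hab)
    · rintro ⟨y, hy⟩
      rw [Set.mem_mul] at hy
      obtain ⟨a, ha, b, hb, rfl⟩ := hy
      exact ⟨(⟨a, ha⟩, ⟨b, hb⟩), rfl⟩
  rw [← Nat.card_congr (Equiv.ofBijective _ hbij), Nat.card_prod]

lemma cmx_mul_eq_univ [Finite G] {H K : Subgroup G} (h : H ⊓ K = ⊥)
    (hc : Nat.card H * Nat.card K = Nat.card G) :
    (↑H * ↑K : Set G) = Set.univ := by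
  apply Set.eq_of_subset_of_ncard_le (Set.subset_univ _) _ Set.finite_univ
  rw [Set.ncard_univ, ← Nat.card_coe_set_eq, cmx_card_mul h, hc]

lemma cmx_prime_card [Finite G] {H : Subgroup G} (hbot : H ≠ ⊥)
    (hsub : ∀ L : Subgroup G, L ≤ H → L = ⊥ ∨ L = H) : (Nat.card H).Prime := by
  obtain ⟨⟨x, hxH⟩, hx1⟩ := Subgroup.ne_bot_iff_exists_ne_one.mp hbot
  have hx1' : x ≠ 1 := by simpa [Subtype.ext_iff] using hx1
  have hzx : Subgroup.zpowers x = H :=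
    (hsub _ ((Subgroup.zpowers_le).mpr hxH)).resolve_left (zpowers_ne_bot.mpr hx1')
  have hcard : Nat.card H = orderOf x := by rw [← hzx, Nat.card_zpowers]
  have hne1 : orderOf x ≠ 1 := fun e => hx1' (orderOf_eq_one_iff.mp e)
  obtain ⟨r, hr, hrd⟩ := Nat.exists_prime_and_dvd hne1
  set y := x ^ (orderOf x / r) with hy
  have hyo : orderOf y = r := orderOf_pow_orderOf_div (orderOf_pos x).ne' hrd
  have hy1 : y ≠ 1 := fun e => hr.one_lt.ne' (by rw [← hyo, e, orderOf_one])
  have hzy : Subgroup.zpowers y = H :=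
    (hsub _ ((Subgroup.zpowers_le).mpr (pow_mem hxH _))).resolve_left
      (zpowers_ne_bot.mpr hy1)
  rw [← hzy, Nat.card_zpowers, hyo]
  exact hr

lemma cmx_dvd_pq {p q d : ℕ} (hp : p.Prime) (hq : q.Prime) (hd : d ∣ p * q)
    (h1 : d ≠ 1) (hpq : d ≠ p * q) : d = p ∨ d = q := by
  obtain ⟨a, b, ha, hb, rfl⟩ := Nat.dvd_mul.mp hd
  rcases hp.eq_one_or_self_of_dvd a ha with rfl | rfl <;>
    rcases hq.eq_one_or_self_of_dvd b hb with rfl | rfl <;> simp_all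

lemma cmx_pq [Finite G] {p q : ℕ} (hp : p.Prime) (hq : q.Prime)
    (hlt : p < q) (hcard : Nat.card G = p * q) :
    ∃ H : Subgroup G, H ≠ ⊥ ∧ H ≠ ⊤ ∧
      (∀ K : Subgroup G, K ≠ ⊥ → K ≠ ⊤ → K ≠ H →
        (H : Set G) * (K : Set G) = Set.univ) ∧
      (∃ K : Subgroup G, K ≠ ⊥ ∧ K ≠ ⊤ ∧ K ≠ H) := by
  have hne : p ≠ q := hlt.ne
  haveI : Fact p.Prime := ⟨hp⟩
  haveI : Fact q.Prime := ⟨hq⟩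
  obtain ⟨g, hg⟩ := exists_prime_orderOf_dvd_card' q (hcard ▸ Dvd.intro_left p rfl)
  obtain ⟨k, hk⟩ := exists_prime_orderOf_dvd_card' p (hcard ▸ Dvd.intro q rfl)
  set Q := Subgroup.zpowers g with hQdef
  set K₀ := Subgroup.zpowers k with hK₀def
  have hcQ : Nat.card Q = q := by rw [hQdef, Nat.card_zpowers, hg]
  have hcK₀ : Nat.card K₀ = p := by rw [hK₀def, Nat.card_zpowers, hk]
  have hqlt : q < p * q := lt_mul_of_one_lt_left hq.pos hp.one_lt
  have hplt : p < p * q := lt_mul_of_one_lt_right hp.pos hq.one_lt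
  have hQb : Q ≠ ⊥ := by
    intro h; rw [h, Subgroup.card_bot] at hcQ; exact hq.ne_one hcQ.symm
  have hQt : Q ≠ ⊤ := by
    intro e; rw [e, Subgroup.card_top, hcard] at hcQ
    exact hqlt.ne' hcQ
  have hK₀b : K₀ ≠ ⊥ := by
    intro h; rw [h, Subgroup.card_bot] at hcK₀; exact hp.ne_one hcK₀.symm
  have hK₀t : K₀ ≠ ⊤ := by
    intro e; rw [e, Subgroup.card_top, hcard] at hcK₀
    exact hplt.ne' hcK₀
  have hK₀Q : K₀ ≠ Q := by
    intro e; rw [e, hcQ] at hcK₀; exact hne hcK₀.symm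
  refine ⟨Q, hQb, hQt, ?_, K₀, hK₀b, hK₀t, hK₀Q⟩
  intro K hKb hKt hKQ
  have hdvd : Nat.card K ∣ p * q := hcard ▸ Subgroup.card_subgroup_dvd_card K
  have hd1 : Nat.card K ≠ 1 := fun e => hKb (Subgroup.card_eq_one.mp e)
  have hdpq : Nat.card K ≠ p * q := by
    intro e
    exact hKt (Subgroup.eq_of_le_of_card_ge le_top
      (by rw [Subgroup.card_top, hcard, e]))
  rcases cmx_dvd_pq hp hq hdvd hd1 hdpq with hKp | hKq
  · -- card K = p
    have hinf : Q ⊓ K = ⊥ := by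
      rw [← Subgroup.card_eq_one]
      have h1 : Nat.card (Q ⊓ K : Subgroup G) ∣ q :=
        hcQ ▸ Subgroup.card_dvd_of_le inf_le_left
      have h2 : Nat.card (Q ⊓ K : Subgroup G) ∣ p :=
        hKp ▸ Subgroup.card_dvd_of_le inf_le_right
      have hcop : Nat.gcd q p = 1 := (Nat.coprime_primes hq hp).mpr hne.symm
      exact Nat.dvd_one.mp (hcop ▸ Nat.dvd_gcd h1 h2)
    exact cmx_mul_eq_univ hinf (by rw [hcQ, hKp, hcard, mul_comm])
  · -- card K = q : impossible
    exfalso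
    have h1 : Nat.card (Q ⊓ K : Subgroup G) ∣ q :=
      hcQ ▸ Subgroup.card_dvd_of_le inf_le_left
    rcases hq.eq_one_or_self_of_dvd _ h1 with hc1 | hcq
    · have hinf : Q ⊓ K = ⊥ := Subgroup.card_eq_one.mp hc1
      have hle : Nat.card (Q × K) ≤ Nat.card G :=
        Nat.card_le_card_of_injective _ (cmx_mul_inj hinf)
      rw [Nat.card_prod, hcQ, hKq, hcard] at hle
      have : p * q < q * q := by
        have := hq.pos; nlinarith
      omega
    · have hQK : Q ⊓ K = Q := Subgroup.eq_of_le_of_card_ge inf_le_left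
        (by rw [hcQ, hcq])
      have hle : Q ≤ K := by rw [← hQK]; exact inf_le_right
      exact hKQ (Subgroup.eq_of_le_of_card_ge hle (by rw [hcQ, hKq])).symm

lemma cmx_p2 [Finite G] {p : ℕ} (hp : p.Prime)
    (e : G ≃* Multiplicative (ZMod p × ZMod p)) :
    ∃ H : Subgroup G, H ≠ ⊥ ∧ H ≠ ⊤ ∧
      (∀ K : Subgroup G, K ≠ ⊥ → K ≠ ⊤ → K ≠ H →
        (H : Set G) * (K : Set G) = Set.univ) ∧
      (∃ K : Subgroup G, K ≠ ⊥ ∧ K ≠ ⊤ ∧ K ≠ H) := by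
  haveI : Fact p.Prime := ⟨hp⟩
  have hcard : Nat.card G = p * p := by
    rw [Nat.card_congr e.toEquiv]
    show Nat.card (ZMod p × ZMod p) = p * p
    rw [Nat.card_prod, Nat.card_zmod]
  have hexp : ∀ g : G, g ^ p = 1 := by
    intro g
    apply e.injective
    rw [map_pow, map_one]
    apply Multiplicative.toAdd.injective
    rw [toAdd_pow]
    show p • (e g).toAdd = (0 : ZMod p × ZMod p)
    apply Prod.ext <;>
      simp [nsmul_eq_mul, ZMod.natCast_self]
  have hplt : p < p * p := lt_mul_of_one_lt_left hp.pos hp.one_lt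
  have hgord : ∀ g : G, g ≠ 1 → orderOf g = p := by
    intro g hg
    rcases hp.eq_one_or_self_of_dvd _ (orderOf_dvd_of_pow_eq_one (hexp g)) with h | h
    · exact absurd (orderOf_eq_one_iff.mp h) hg
    · exact h
  have hcard_zp : ∀ g : G, g ≠ 1 → Nat.card (Subgroup.zpowers g) = p := by
    intro g hg; rw [Nat.card_zpowers, hgord g hg]
  -- all nontrivial proper subgroups have card p
  have hallp : ∀ K : Subgroup G, K ≠ ⊥ → K ≠ ⊤ → Nat.card K = p := by
    intro K hKb hKt
    have hdvd : Nat.card K ∣ p * p := hcard ▸ Subgroup.card_subgroup_dvd_card K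
    have hd1 : Nat.card K ≠ 1 := fun h => hKb (Subgroup.card_eq_one.mp h)
    have hdpq : Nat.card K ≠ p * p := by
      intro h
      exact hKt (Subgroup.eq_of_le_of_card_ge le_top
        (by rw [Subgroup.card_top, hcard, h]))
    rcases cmx_dvd_pq hp hp hdvd hd1 hdpq with h | h <;> exact h
  -- pick generators
  have hnt : Nontrivial G := by
    have : 1 < Nat.card G := by rw [hcard]; nlinarith [hp.one_lt]
    exact Finite.one_lt_card_iff_nontrivial.mp this
  obtain ⟨a, ha⟩ := exists_ne (1 : G)
  set H := Subgroup.zpowers a with hHdef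
  have hcH : Nat.card H = p := hcard_zp a ha
  have hHb : H ≠ ⊥ := zpowers_ne_bot.mpr ha
  have hHt : H ≠ ⊤ := by
    intro h; rw [h, Subgroup.card_top, hcard] at hcH
    exact hplt.ne' hcH
  obtain ⟨b, -, hbH⟩ := SetLike.exists_of_lt (hHt.lt_top)
  have hb1 : b ≠ 1 := fun h => hbH (h ▸ H.one_mem)
  set K₀ := Subgroup.zpowers b with hK₀def
  have hK₀b : K₀ ≠ ⊥ := zpowers_ne_bot.mpr hb1
  have hcK₀ : Nat.card K₀ = p := hcard_zp b hb1
  have hK₀t : K₀ ≠ ⊤ := by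
    intro h; rw [h, Subgroup.card_top, hcard] at hcK₀
    exact hplt.ne' hcK₀
  have hK₀H : K₀ ≠ H := fun h => hbH (h ▸ Subgroup.mem_zpowers b)
  refine ⟨H, hHb, hHt, ?_, K₀, hK₀b, hK₀t, hK₀H⟩
  intro K hKb hKt hKH
  have hcK : Nat.card K = p := hallp K hKb hKt
  have hinf : H ⊓ K = ⊥ := by
    rw [← Subgroup.card_eq_one]
    have h1 : Nat.card (H ⊓ K : Subgroup G) ∣ p :=
      hcH ▸ Subgroup.card_dvd_of_le inf_le_left
    rcases hp.eq_one_or_self_of_dvd _ h1 with h | h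
    · exact h
    · exfalso
      have hHK : H ⊓ K = H := Subgroup.eq_of_le_of_card_ge inf_le_left
        (by rw [hcH, h])
      have hle : H ≤ K := by rw [← hHK]; exact inf_le_right
      exact hKH (Subgroup.eq_of_le_of_card_ge hle (by rw [hcH, hcK])).symm
  exact cmx_mul_eq_univ hinf (by rw [hcH, hcK, hcard])

lemma cmx_addequiv {A : Type*} [AddCommGroup A] [Finite A] {p : ℕ} (hp : p.Prime)
    [Module (ZMod p) A] (hA : Nat.card A = p ^ 2) :
    Nonempty (A ≃+ ZMod p × ZMod p) := by
  haveI : Fact p.Prime := ⟨hp⟩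
  letI : Fintype A := Fintype.ofFinite _
  letI : Fintype (ZMod p) := ZMod.fintype p
  have hc := Module.card_eq_pow_finrank (K := ZMod p) (V := A)
  rw [ZMod.card, ← Nat.card_eq_fintype_card, hA] at hc
  have hfr : Module.finrank (ZMod p) A = 2 :=
    Nat.pow_right_injective hp.two_le hc.symm
  let b := Module.finBasisOfFinrankEq (ZMod p) A hfr
  exact ⟨(b.equiv (Module.Basis.finTwoProd (ZMod p)) (Equiv.refl _)).toAddEquiv⟩

lemma cmx_iso {G : Type*} [CommGroup G] [Finite G] {p : ℕ} (hp : p.Prime)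
    (hexp : ∀ g : G, g ^ p = 1) (hG2 : Nat.card G = p ^ 2) :
    Nonempty (G ≃* Multiplicative (ZMod p × ZMod p)) := by
  letI : Module (ZMod p) (Additive G) := AddCommGroup.zmodModule (n := p)
    (fun x => Additive.toMul.injective (by
      rw [toMul_nsmul, toMul_zero]; exact hexp x.toMul))
  have hA : Nat.card (Additive G) = p ^ 2 := by
    rw [← hG2]; exact Nat.card_congr Additive.toMul
  obtain ⟨ea⟩ := cmx_addequiv hp hA
  exact ⟨(MulEquiv.multiplicativeAdditive G).symm.trans
    (AddEquiv.toMultiplicative ea)⟩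
lemma cmx_forward [Finite G] (H : Subgroup G) (hHb : H ≠ ⊥) (hHt : H ≠ ⊤)
    (huniv : ∀ K : Subgroup G, K ≠ ⊥ → K ≠ ⊤ → K ≠ H →
      (H : Set G) * (K : Set G) = Set.univ)
    (K₀ : Subgroup G) (hK₀b : K₀ ≠ ⊥) (hK₀t : K₀ ≠ ⊤) (hK₀H : K₀ ≠ H) :
    ((∃ p : ℕ, p.Prime ∧ Nonempty (G ≃* Multiplicative (ZMod p × ZMod p))) ∨
      (∃ p q : ℕ, p.Prime ∧ q.Prime ∧ p ≠ q ∧ Nat.card G = p * q)) := by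
  -- Step A : subgroups below H are ⊥ or H
  have hA : ∀ L : Subgroup G, L ≤ H → L = ⊥ ∨ L = H := by
    intro L hL
    by_contra hcon
    push_neg at hcon
    have hLt : L ≠ ⊤ := fun e => hHt (top_le_iff.mp (e ▸ hL))
    have h := huniv L hcon.1 hLt hcon.2
    have hsub : (↑H * ↑L : Set G) ⊆ (H : Set G) := by
      rintro x hx
      rw [Set.mem_mul] at hx
      obtain ⟨a, ha, b, hb, rfl⟩ := hx
      exact H.mul_mem ha (hL hb)
    rw [h] at hsub
    exact hHt ((Subgroup.eq_top_iff' _).mpr fun g => hsub (Set.mem_univ g))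
  have hp : (Nat.card H).Prime := cmx_prime_card hHb hA
  set p := Nat.card H with hpdef
  -- Step C
  have hC : ∀ K : Subgroup G, K ≠ ⊥ → K ≠ ⊤ → K ≠ H →
      H ⊓ K = ⊥ ∧ p * Nat.card K = Nat.card G := by
    intro K hKb hKt hKH
    have hinf : H ⊓ K = ⊥ := by
      rcases hA (H ⊓ K) inf_le_left with h | h
      · exact h
      · exfalso
        have hle : H ≤ K := inf_eq_left.mp h
        have hsub : (↑H * ↑K : Set G) ⊆ (K : Set G) := by
          rintro x hx
          rw [Set.mem_mul] at hx
          obtain ⟨a, ha, b, hb, rfl⟩ := hx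
          exact K.mul_mem (hle ha) hb
        rw [huniv K hKb hKt hKH] at hsub
        exact hKt ((Subgroup.eq_top_iff' _).mpr fun g => hsub (Set.mem_univ g))
    refine ⟨hinf, ?_⟩
    rw [hpdef, ← cmx_card_mul hinf, huniv K hKb hKt hKH]
    exact Nat.card_congr (Equiv.Set.univ G)
  obtain ⟨hinf₀, hcard₀⟩ := hC K₀ hK₀b hK₀t hK₀H
  -- Step D : K₀ has prime order
  have hsubK₀ : ∀ L : Subgroup G, L ≤ K₀ → L = ⊥ ∨ L = K₀ := by
    intro L hL
    by_contra hcon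
    push_neg at hcon
    have hLt : L ≠ ⊤ := fun e => hK₀t (top_le_iff.mp (e ▸ hL))
    have hLH : L ≠ H := by
      intro hLH
      have h2 : H ≤ H ⊓ K₀ := le_inf le_rfl (hLH ▸ hL)
      rw [hinf₀] at h2
      exact hcon.1 (by rw [hLH]; exact le_bot_iff.mp h2)
    obtain ⟨-, hcL⟩ := hC L hcon.1 hLt hLH
    have hcc : Nat.card L = Nat.card K₀ :=
      Nat.eq_of_mul_eq_mul_left hp.pos (hcL.trans hcard₀.symm)
    exact hcon.2 (Subgroup.eq_of_le_of_card_ge hL hcc.ge)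
  have hq : (Nat.card K₀).Prime := cmx_prime_card hK₀b hsubK₀
  set q := Nat.card K₀ with hqdef
  have hcardG : Nat.card G = p * q := hcard₀.symm
  by_cases hpq : p = q
  · -- |G| = p², build G ≃ Z_p × Z_p
    left
    haveI : Fact p.Prime := ⟨hp⟩
    have hG2 : Nat.card G = p ^ 2 := by rw [hcardG, ← hpq, sq]
    have hcomm : ∀ a b : G, a * b = b * a :=
      IsPGroup.commutative_of_card_eq_prime_sq hG2
    -- H ⊔ K₀ = ⊤
    have hsup : H ⊔ K₀ = ⊤ := by
      have hd : Nat.card (H ⊔ K₀ : Subgroup G) ∣ p ^ 2 :=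
        hG2 ▸ Subgroup.card_subgroup_dvd_card _
      obtain ⟨k, hk2, hkc⟩ := (Nat.dvd_prime_pow hp).mp hd
      interval_cases k
      · exfalso
        have : (H ⊔ K₀ : Subgroup G) = ⊥ := Subgroup.card_eq_one.mp (by simpa using hkc)
        exact hHb (le_bot_iff.mp (this ▸ le_sup_left))
      · exfalso
        have hHS : H = H ⊔ K₀ := Subgroup.eq_of_le_of_card_ge le_sup_left
          (by rw [hkc, pow_one, hpdef])
        have : K₀ ≤ H := hHS ▸ le_sup_right
        rcases hA K₀ this with h | h
        · exact hK₀b h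
        · exact hK₀H h
      · exact Subgroup.eq_of_le_of_card_ge le_top
          (by rw [Subgroup.card_top, hG2, hkc])
    -- exponent p
    have hexp : ∀ g : G, g ^ p = 1 := by
      have hE : ∀ (L : Subgroup G), Nat.card L = p → ∀ x ∈ L, x ^ p = 1 := by
        intro L hcL x hx
        have h1 : (⟨x, hx⟩ : L) ^ p = 1 := by
          rw [← hcL]; exact pow_card_eq_one'
        have := congrArg (Subtype.val) h1
        simpa using this
      set E : Subgroup G :=
        { carrier := {x : G | x ^ p = 1}
          one_mem' := one_pow p
          mul_mem' := by
            intro a b ha hb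
            have hab : Commute a b := hcomm a b
            show (a * b) ^ p = 1
            rw [hab.mul_pow, ha, hb, mul_one]
          inv_mem' := by
            intro a ha
            show (a⁻¹) ^ p = 1
            rw [inv_pow, ha, inv_one] } with hEdef
      have hHE : H ≤ E := fun x hx => hE H rfl x hx
      have hKE : K₀ ≤ E := fun x hx => hE K₀ hpq.symm x hx
      have : (⊤ : Subgroup G) ≤ E := hsup ▸ sup_le hHE hKE
      intro g
      exact this (Subgroup.mem_top g)
    -- build the isomorphism
    letI : CommGroup G := { (‹Group G› : Group G) with mul_comm := hcomm }
    exact ⟨p, hp, cmx_iso hp hexp hG2⟩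
  · exact Or.inr ⟨p, q, hp, hq, hpq, hcardG⟩

end Helpers

/-- For a finite group `G`, `Γ(G)` has a universal vertex iff `G ≅ Z_p × Z_p`
for some prime `p`, or `|G| = pq` for distinct primes `p`, `q`. -/
theorem comaximal_universal_vertex_iff {G : Type*} [Group G] [Finite G] :
    (∃ H : Subgroup G, H ≠ ⊥ ∧ H ≠ ⊤ ∧
      (∀ K : Subgroup G, K ≠ ⊥ → K ≠ ⊤ → K ≠ H →
        (H : Set G) * (K : Set G) = Set.univ) ∧
      (∃ K : Subgroup G, K ≠ ⊥ ∧ K ≠ ⊤ ∧ K ≠ H)) ↔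
    ((∃ p : ℕ, p.Prime ∧ Nonempty (G ≃* Multiplicative (ZMod p × ZMod p))) ∨
      (∃ p q : ℕ, p.Prime ∧ q.Prime ∧ p ≠ q ∧ Nat.card G = p * q)) := by
  constructor
  · rintro ⟨H, hHb, hHt, huniv, K₀, hK₀b, hK₀t, hK₀H⟩
    exact cmx_forward H hHb hHt huniv K₀ hK₀b hK₀t hK₀H
  · rintro (⟨p, hp, ⟨e⟩⟩ | ⟨p, q, hp, hq, hne, hcard⟩)
    · exact cmx_p2 hp e
    · rcases hne.lt_or_gt with h | h
      · exact cmx_pq hp hq h hcard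
      · exact cmx_pq hq hp h (by rw [hcard, mul_comm])
end

section
/- Let G be a finite nilpotent group. Then Γ*(G) is a star graph — i.e., there exists a non-isolated vertex H of Γ(G) that is adjacent to every other non-isolated vertex, no two non-isolated vertices both different from H are adjacent, and there exists at least one non-isolated vertex different from H — if and only if either the order of G equals pq for distinct primes p and q, or G is a cyclic group of order p^r q for distinct primes p, q and some integer r ≥ 2. -/
/-!
A star contains no triangle and no two disjoint edges. If `G` is not cyclic, every element lies in
a maximal subgroup, so (a group not being a union of two proper subgroups) there are at least
three maximal subgroups; in a nilpotent group they are normal, hence pairwise co-maximal, and form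
a triangle. If `G` is cyclic of order `n`, subgroups correspond to divisors of `n`, and two proper
subgroups are adjacent iff the lcm of their orders is `n`. Distinct primes `p, q, s ∣ n` give the
triangle `n/p, n/q, n/s`, and `p², q² ∣ n` give the disjoint edges `{n/p, n/q}`, `{n/p², n/q²}`;
so a star forces `n = p^r q`, and conversely for such `n` every edge contains the subgroup of
order `p^r`. A nilpotent group of squarefree order `pq` is cyclic.
-/

open scoped Pointwise

/-- Adjacency in the co-maximal subgroup graph `Γ(G)`: `H` and `K` are distinct
non-trivial proper subgroups of `G` with `HK = G` as a setwise product. -/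
def comaxAdj {G : Type*} [Group G] (H K : Subgroup G) : Prop :=
  H ≠ ⊥ ∧ H ≠ ⊤ ∧ K ≠ ⊥ ∧ K ≠ ⊤ ∧ H ≠ K ∧ (H : Set G) * (K : Set G) = Set.univ

section StarCenter

variable {α β : Type*} {R : α → α → Prop} {S : β → β → Prop} {c : α}

-- For symmetric irreflexive `R`, the non-isolated vertices form a star centred at `c`.
def IsStarCenter (R : α → α → Prop) (c : α) : Prop :=
  (∃ e, R c e) ∧ ∀ a b, R a b → a = c ∨ b = c

theorem isStarCenter_iff (hsymm : ∀ {a b}, R a b → R b a) (hirr : ∀ a, ¬ R a a) :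
    ((∃ e, R c e) ∧ (∀ a, (∃ e, R a e) → a ≠ c → R c a) ∧
      (∀ a b, (∃ e, R a e) → (∃ e, R b e) → a ≠ c → b ≠ c → ¬ R a b) ∧
      (∃ a, (∃ e, R a e) ∧ a ≠ c)) ↔ IsStarCenter R c := by
  constructor
  · rintro ⟨hc, -, hno, -⟩
    refine ⟨hc, fun a b hab => ?_⟩
    by_contra! h
    exact hno a b ⟨b, hab⟩ ⟨a, hsymm hab⟩ h.1 h.2 hab
  · rintro ⟨⟨e, hce⟩, hcover⟩
    refine ⟨⟨e, hce⟩, fun a ⟨b, hab⟩ hac => ?_, fun a b _ _ hac hbc hab => ?_,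
      ⟨e, ⟨c, hsymm hce⟩, fun h => hirr c (h ▸ hce)⟩⟩
    · rcases hcover a b hab with h | rfl
      exacts [absurd h hac, hsymm hab]
    · rcases hcover a b hab with h | h
      exacts [hac h, hbc h]

theorem IsStarCenter.not_triangle (h : IsStarCenter R c) (hirr : ∀ a, ¬ R a a) {a b d : α}
    (hab : R a b) (had : R a d) (hbd : R b d) : False := by
  rcases h.2 a b hab with rfl | rfl
  · rcases h.2 b d hbd with rfl | rfl
    exacts [hirr _ hab, hirr _ had]
  · rcases h.2 a d had with rfl | rfl
    exacts [hirr _ hab, hirr _ hbd]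

theorem exists_isStarCenter_iff_of_injective {f : α → β} (hf : Function.Injective f)
    (hRS : ∀ a b, R a b ↔ S (f a) (f b)) (hS : ∀ x y, S x y → x ∈ Set.range f ∧ y ∈ Set.range f) :
    (∃ c, IsStarCenter R c) ↔ ∃ c, IsStarCenter S c := by
  constructor
  · rintro ⟨c, ⟨e, hce⟩, hcover⟩
    refine ⟨f c, ⟨f e, (hRS c e).1 hce⟩, fun x y hxy => ?_⟩
    obtain ⟨⟨a, rfl⟩, ⟨b, rfl⟩⟩ := hS x y hxy
    exact (hcover a b ((hRS a b).2 hxy)).imp (congrArg f) (congrArg f)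
  · rintro ⟨x, ⟨y, hxy⟩, hcover⟩
    obtain ⟨⟨c, rfl⟩, ⟨e, rfl⟩⟩ := hS _ _ hxy
    refine ⟨c, ⟨e, (hRS c e).2 hxy⟩, fun a b hab => ?_⟩
    exact (hcover _ _ ((hRS a b).1 hab)).imp (fun h => hf h) (fun h => hf h)

end StarCenter

namespace Nat

-- Co-maximality in the cyclic group of order `n`, read on the orders of the two subgroups.
def lcmAdj (n d e : ℕ) : Prop := d ≠ n ∧ e ≠ n ∧ d.lcm e = n

variable {n p q r a b x y : ℕ}

theorem lcmAdj_irrefl (a : ℕ) : ¬ lcmAdj n a a := fun ⟨ha, _, h⟩ => ha (by rwa [lcm_self] at h)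

theorem lcmAdj.ne_zero (h : lcmAdj n a b) : n ≠ 0 := by
  rintro rfl
  rcases lcm_eq_zero_iff.1 h.2.2 with h' | h'
  exacts [h.1 h', h.2.1 h']

theorem lcm_div_div_of_coprime (hx : x ∣ n) (hy : y ∣ n) (hxy : x.Coprime y) :
    (n / x).lcm (n / y) = n := by
  refine dvd_antisymm (lcm_dvd (div_dvd_of_dvd hx) (div_dvd_of_dvd hy)) ?_
  have hxL : n ∣ x * (n / x).lcm (n / y) := by
    conv_lhs => rw [← Nat.mul_div_cancel' hx]
    exact Nat.mul_dvd_mul_left x (dvd_lcm_left _ _)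
  have hyL : n ∣ y * (n / x).lcm (n / y) := by
    conv_lhs => rw [← Nat.mul_div_cancel' hy]
    exact Nat.mul_dvd_mul_left y (dvd_lcm_right _ _)
  simpa [Nat.gcd_mul_right, hxy.gcd_eq_one, mul_comm] using dvd_gcd hxL hyL

theorem lcmAdj_div_div (hn : n ≠ 0) (hx : x ∣ n) (hy : y ∣ n) (hx1 : 1 < x) (hy1 : 1 < y)
    (hxy : x.Coprime y) : lcmAdj n (n / x) (n / y) :=
  ⟨(div_lt_self (pos_of_ne_zero hn) hx1).ne, (div_lt_self (pos_of_ne_zero hn) hy1).ne,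
    lcm_div_div_of_coprime hx hy hxy⟩

theorem not_lcmAdj_prime_pow (hp : p.Prime) (k : ℕ) : ¬ lcmAdj (p ^ k) a b := by
  rintro ⟨ha, hb, hab⟩
  obtain ⟨i, -, rfl⟩ := (dvd_prime_pow hp).1 (hab ▸ dvd_lcm_left a b)
  obtain ⟨j, -, rfl⟩ := (dvd_prime_pow hp).1 (hab ▸ dvd_lcm_right (p ^ i) b)
  rcases le_total i j with h | h
  · exact hb (by rwa [lcm_eq_right (pow_dvd_pow p h)] at hab)
  · exact ha (by rwa [lcm_eq_left (pow_dvd_pow p h)] at hab)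

theorem lcmAdj.exists_primes (h : lcmAdj n a b) :
    ∃ p q, p.Prime ∧ q.Prime ∧ p ≠ q ∧ p ∣ n ∧ q ∣ n := by
  have hn1 : n ≠ 1 := by
    rintro rfl
    exact not_lcmAdj_prime_pow prime_two 0 h
  obtain ⟨p, hp, hpn⟩ := exists_prime_and_dvd hn1
  by_contra! hne
  have hpow := eq_prime_pow_of_unique_prime_dvd h.ne_zero
    fun {s} hs hsn => by_contra fun hsp => hne s p hs hp hsp hsn hpn
  exact not_lcmAdj_prime_pow hp _ (hpow ▸ h)

theorem Prime.pow_dvd_or_pow_dvd_of_dvd_lcm (hp : p.Prime) (ha : a ≠ 0) (hb : b ≠ 0)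
    (h : p ^ r ∣ a.lcm b) : p ^ r ∣ a ∨ p ^ r ∣ b := by
  rw [hp.pow_dvd_iff_le_factorization (lcm_ne_zero ha hb), factorization_lcm ha hb,
    Finsupp.sup_apply, le_sup_iff] at h
  simpa only [hp.pow_dvd_iff_le_factorization ha, hp.pow_dvd_iff_le_factorization hb] using h

theorem lcmAdj_pow_mul_eq_or_eq (hp : p.Prime) (hq : q.Prime) (h : lcmAdj (p ^ r * q) a b) :
    a = p ^ r ∨ b = p ^ r := by
  have key : ∀ d, d ∣ p ^ r * q → d ≠ p ^ r * q → p ^ r ∣ d → d = p ^ r := by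
    rintro d hd hdn ⟨m, rfl⟩
    have hmq : m ∣ q :=
      (Nat.mul_dvd_mul_iff_left (pos_of_ne_zero (pow_ne_zero r hp.ne_zero))).1 hd
    rcases hq.eq_one_or_self_of_dvd m hmq with rfl | rfl
    exacts [mul_one _, absurd rfl hdn]
  have hn := h.ne_zero
  obtain ⟨ha, hb, hab⟩ := h
  have ha0 : a ≠ 0 := fun h0 => hn (by simp [← hab, h0])
  have hb0 : b ≠ 0 := fun h0 => hn (by simp [← hab, h0])
  rcases hp.pow_dvd_or_pow_dvd_of_dvd_lcm ha0 hb0 (hab ▸ dvd_mul_right (p ^ r) q) with h | h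
  · exact Or.inl (key a (hab ▸ dvd_lcm_left a b) ha h)
  · exact Or.inr (key b (hab ▸ dvd_lcm_right a b) hb h)

theorem isStarCenter_lcmAdj_pow_mul (hp : p.Prime) (hq : q.Prime) (hpq : p ≠ q) (hr : r ≠ 0) :
    IsStarCenter (lcmAdj (p ^ r * q)) (p ^ r) := by
  have hpr : 1 < p ^ r := one_lt_pow hr hp.one_lt
  refine ⟨⟨q, ?_, ?_, ?_⟩, fun a b h => lcmAdj_pow_mul_eq_or_eq hp hq h⟩
  · exact ((lt_mul_iff_one_lt_right (by omega)).2 hq.one_lt).ne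
  · exact ((lt_mul_iff_one_lt_left hq.pos).2 hpr).ne
  · exact (((coprime_primes hp hq).2 hpq).pow_left r).lcm_eq_mul

section

variable {d : ℕ} (h : IsStarCenter (lcmAdj n) d) (hn : n ≠ 0) (hp : p.Prime) (hq : q.Prime)
  (hpq : p ≠ q) (hpn : p ∣ n) (hqn : q ∣ n)
include h hn hp hq hpq hpn hqn

theorem eq_or_eq_of_isStarCenter_lcmAdj (s : ℕ) (hs : s.Prime) (hsn : s ∣ n) :
    s = p ∨ s = q := by
  by_contra! hs'
  have hcop {t u : ℕ} (ht : t.Prime) (hu : u.Prime) (htu : t ≠ u) := (coprime_primes ht hu).2 htu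
  exact h.not_triangle lcmAdj_irrefl
    (lcmAdj_div_div hn hpn hqn hp.one_lt hq.one_lt (hcop hp hq hpq))
    (lcmAdj_div_div hn hpn hsn hp.one_lt hs.one_lt (hcop hp hs hs'.1.symm))
    (lcmAdj_div_div hn hqn hsn hq.one_lt hs.one_lt (hcop hq hs hs'.2.symm))

-- Otherwise `{n / p, n / q}` and `{n / p ^ 2, n / q ^ 2}` would be two disjoint edges.
theorem not_sq_dvd_or_not_sq_dvd_of_isStarCenter_lcmAdj : ¬ p ^ 2 ∣ n ∨ ¬ q ^ 2 ∣ n := by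
  by_contra! hsq
  obtain ⟨hp2, hq2⟩ := hsq
  have hcop := (coprime_primes hp hq).2 hpq
  have hsq_ne {s t : ℕ} (hs : s.Prime) : s ≠ t ^ 2 := fun h => Prime.not_prime_pow le_rfl (h ▸ hs)
  have hdiv_ne {x y : ℕ} (hx : x ∣ n) (hy : y ∣ n) (hxy : x ≠ y) : n / x ≠ n / y :=
    fun h => hxy ((div_eq_iff_eq_of_dvd_dvd hn hx hy).1 h)
  rcases h.2 _ _ (lcmAdj_div_div hn hpn hqn hp.one_lt hq.one_lt hcop) with h1 | h1 <;>
  rcases h.2 _ _ (lcmAdj_div_div hn hp2 hq2 (one_lt_pow two_ne_zero hp.one_lt)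
    (one_lt_pow two_ne_zero hq.one_lt) (hcop.pow 2 2)) with h2 | h2
  · exact hdiv_ne hpn hp2 (hsq_ne hp) (h1.trans h2.symm)
  · exact hdiv_ne hpn hq2 (hsq_ne hp) (h1.trans h2.symm)
  · exact hdiv_ne hqn hp2 (hsq_ne hq) (h1.trans h2.symm)
  · exact hdiv_ne hqn hq2 (hsq_ne hq) (h1.trans h2.symm)

end

theorem exists_eq_pow_mul_of_not_sq_dvd (hp : p.Prime) (hq : q.Prime) (hpq : p ≠ q)
    (hn : n ≠ 0) (hpn : p ∣ n) (hqn : q ∣ n) (honly : ∀ s, s.Prime → s ∣ n → s = p ∨ s = q)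
    (hq2 : ¬ q ^ 2 ∣ n) : ∃ r, r ≠ 0 ∧ n = p ^ r * q := by
  obtain ⟨m, rfl⟩ := hqn
  have hqm : ¬ q ∣ m := fun h => hq2 (by rw [sq]; exact Nat.mul_dvd_mul_left q h)
  have hpm : p ∣ m := ((Prime.dvd_mul hp).1 hpn).resolve_left
    fun h => hpq ((prime_dvd_prime_iff_eq hp hq).1 h)
  have hm := eq_prime_pow_of_unique_prime_dvd (right_ne_zero_of_mul hn) fun {s} hs hsm =>
    (honly s hs (dvd_mul_of_dvd_right hsm q)).resolve_right (by rintro rfl; exact hqm hsm)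
  refine ⟨_, fun h0 => ?_, by rw [mul_comm, ← hm]⟩
  rw [h0, pow_zero] at hm
  exact hp.one_lt.ne' (dvd_one.1 (hm ▸ hpm))

theorem exists_eq_pow_mul_of_isStarCenter_lcmAdj {d : ℕ} (h : IsStarCenter (lcmAdj n) d) :
    ∃ p q r, p.Prime ∧ q.Prime ∧ p ≠ q ∧ r ≠ 0 ∧ n = p ^ r * q := by
  obtain ⟨e, hde⟩ := h.1
  have hn := hde.ne_zero
  obtain ⟨p, q, hp, hq, hpq, hpn, hqn⟩ := hde.exists_primes
  have honly := eq_or_eq_of_isStarCenter_lcmAdj h hn hp hq hpq hpn hqn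
  rcases not_sq_dvd_or_not_sq_dvd_of_isStarCenter_lcmAdj h hn hp hq hpq hpn hqn with hp2 | hq2
  · obtain ⟨r, hr, hnr⟩ := exists_eq_pow_mul_of_not_sq_dvd hq hp hpq.symm hn hqn hpn
      (fun s hs hsn => (honly s hs hsn).symm) hp2
    exact ⟨q, p, r, hq, hp, hpq.symm, hr, hnr⟩
  · obtain ⟨r, hr, hnr⟩ := exists_eq_pow_mul_of_not_sq_dvd hp hq hpq hn hpn hqn honly hq2
    exact ⟨p, q, r, hp, hq, hpq, hr, hnr⟩

theorem exists_isStarCenter_lcmAdj_iff :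
    (∃ d, IsStarCenter (lcmAdj n) d) ↔
      ∃ p q r, p.Prime ∧ q.Prime ∧ p ≠ q ∧ r ≠ 0 ∧ n = p ^ r * q := by
  refine ⟨fun ⟨_, h⟩ => exists_eq_pow_mul_of_isStarCenter_lcmAdj h, ?_⟩
  rintro ⟨p, q, r, hp, hq, hpq, hr, rfl⟩
  exact ⟨p ^ r, isStarCenter_lcmAdj_pow_mul hp hq hpq hr⟩

end Nat

section Comax

variable {G : Type*} [Group G] {H K : Subgroup G}

theorem comaxAdj_iff : comaxAdj H K ↔ H ≠ ⊤ ∧ K ≠ ⊤ ∧ (H : Set G) * (K : Set G) = Set.univ := by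
  refine ⟨fun ⟨_, hH, _, hK, _, h⟩ => ⟨hH, hK, h⟩, fun ⟨hH, hK, h⟩ => ?_⟩
  refine ⟨?_, hH, ?_, hK, ?_, h⟩
  · rintro rfl
    exact hK (Subgroup.coe_eq_univ.1 (by simpa using h))
  · rintro rfl
    exact hH (Subgroup.coe_eq_univ.1 (by simpa using h))
  · rintro rfl
    exact hH (Subgroup.coe_eq_univ.1 (by rwa [coe_mul_coe] at h))

theorem comaxAdj.symm (h : comaxAdj H K) : comaxAdj K H := by
  obtain ⟨hH, hK, hHK⟩ := comaxAdj_iff.1 h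
  refine comaxAdj_iff.2 ⟨hK, hH, ?_⟩
  rw [← Set.inv_univ, ← hHK, mul_inv_rev, inv_coe_set, inv_coe_set]

theorem comaxAdj_irrefl (H : Subgroup G) : ¬ comaxAdj H H := fun h => h.2.2.2.2.1 rfl

theorem comaxAdj_iff_sup_eq_top [K.Normal] : comaxAdj H K ↔ H ≠ ⊤ ∧ K ≠ ⊤ ∧ H ⊔ K = ⊤ := by
  rw [comaxAdj_iff, ← Subgroup.mul_normal, Subgroup.coe_eq_univ]

theorem comaxAdj_of_isCoatom [Group.IsNilpotent G] {M N : Subgroup G} (hM : IsCoatom M)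
    (hN : IsCoatom N) (hMN : M ≠ N) : comaxAdj M N := by
  have : N.Normal :=
    Subgroup.NormalizerCondition.normal_of_coatom N Group.normalizerCondition_of_isNilpotent hN
  exact comaxAdj_iff_sup_eq_top.2 ⟨hM.1, hN.1, hM.sup_eq_top_of_ne hN hMN⟩

end Comax

namespace IsCyclic

variable {G : Type*} [Group G] [Finite G] [IsCyclic G] {H K : Subgroup G}

theorem exists_subgroup_natCard_eq {d : ℕ} (hd : d ∣ Nat.card G) :
    ∃ H : Subgroup G, Nat.card H = d := by
  let _ := IsCyclic.commGroup (α := G)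
  exact ⟨(powMonoidHom d).ker, by rw [card_powMonoidHom_ker, Nat.gcd_eq_right hd]⟩

theorem mem_subgroup_iff_pow_natCard_eq_one {x : G} : x ∈ K ↔ x ^ Nat.card K = 1 := by
  let _ := IsCyclic.commGroup (α := G)
  have hK : K = (powMonoidHom (Nat.card K)).ker := by
    refine Subgroup.eq_of_le_of_card_ge (fun y hy => ?_) ?_
    · exact orderOf_dvd_iff_pow_eq_one.1 (Subgroup.orderOf_dvd_natCard K hy)
    · rw [card_powMonoidHom_ker, Nat.gcd_eq_right K.card_subgroup_dvd_card]
  conv_lhs => rw [hK]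
  simp

theorem subgroup_le_iff_natCard_dvd : H ≤ K ↔ Nat.card H ∣ Nat.card K := by
  refine ⟨Subgroup.card_dvd_of_le, fun ⟨c, hc⟩ x hx => ?_⟩
  rw [mem_subgroup_iff_pow_natCard_eq_one] at hx ⊢
  rw [hc, pow_mul, hx, one_pow]

theorem natCard_injective : Function.Injective fun H : Subgroup G => Nat.card H :=
  fun _ _ h => le_antisymm (subgroup_le_iff_natCard_dvd.2 (dvd_of_eq h))
    (subgroup_le_iff_natCard_dvd.2 (dvd_of_eq h.symm))

theorem natCard_sup : Nat.card ↥(H ⊔ K) = (Nat.card H).lcm (Nat.card K) := by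
  obtain ⟨L, hL⟩ := exists_subgroup_natCard_eq
    (Nat.lcm_dvd H.card_subgroup_dvd_card K.card_subgroup_dvd_card)
  have hle : H ⊔ K ≤ L := sup_le (subgroup_le_iff_natCard_dvd.2 (hL ▸ Nat.dvd_lcm_left _ _))
    (subgroup_le_iff_natCard_dvd.2 (hL ▸ Nat.dvd_lcm_right _ _))
  exact Nat.dvd_antisymm (hL ▸ Subgroup.card_dvd_of_le hle)
    (Nat.lcm_dvd (Subgroup.card_dvd_of_le le_sup_left) (Subgroup.card_dvd_of_le le_sup_right))

theorem comaxAdj_iff_lcmAdj :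
    comaxAdj H K ↔ Nat.lcmAdj (Nat.card G) (Nat.card H) (Nat.card K) := by
  rw [comaxAdj_iff_sup_eq_top, ne_eq, ne_eq, ← H.card_eq_iff_eq_top, ← K.card_eq_iff_eq_top,
    ← (H ⊔ K).card_eq_iff_eq_top, natCard_sup, Nat.lcmAdj]

theorem exists_isStarCenter_comaxAdj_iff :
    (∃ H : Subgroup G, IsStarCenter comaxAdj H) ↔
      ∃ d, IsStarCenter (Nat.lcmAdj (Nat.card G)) d :=
  exists_isStarCenter_iff_of_injective natCard_injective (fun _ _ => comaxAdj_iff_lcmAdj)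
    fun x y ⟨_, _, h⟩ => ⟨exists_subgroup_natCard_eq (h ▸ Nat.dvd_lcm_left x y),
      exists_subgroup_natCard_eq (h ▸ Nat.dvd_lcm_right x y)⟩

end IsCyclic

section Nilpotent

variable {G : Type*} [Group G] [Finite G]

theorem exists_isCoatom_mem_of_not_isCyclic (h : ¬ IsCyclic G) (x : G) :
    ∃ M : Subgroup G, IsCoatom M ∧ x ∈ M := by
  have hx : Subgroup.zpowers x ≠ ⊤ := fun hx => h ⟨x, (Subgroup.eq_top_iff' _).1 hx⟩
  obtain ⟨M, hM, hle⟩ := (eq_top_or_exists_le_coatom (Subgroup.zpowers x)).resolve_left hx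
  exact ⟨M, hM, hle (Subgroup.mem_zpowers x)⟩

theorem exists_three_isCoatom_of_not_isCyclic (h : ¬ IsCyclic G) :
    ∃ M₁ M₂ M₃ : Subgroup G, IsCoatom M₁ ∧ IsCoatom M₂ ∧ IsCoatom M₃ ∧
      M₁ ≠ M₂ ∧ M₁ ≠ M₃ ∧ M₂ ≠ M₃ := by
  obtain ⟨M₁, hM₁, -⟩ := exists_isCoatom_mem_of_not_isCyclic h 1
  obtain ⟨y, -, hy₁⟩ := SetLike.exists_of_lt hM₁.lt_top
  obtain ⟨M₂, hM₂, hy₂⟩ := exists_isCoatom_mem_of_not_isCyclic h y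
  have h₁₂ : M₁ ≠ M₂ := by rintro rfl; exact hy₁ hy₂
  obtain ⟨a, ha₁, ha₂⟩ :=
    SetLike.not_le_iff_exists.1 fun hle => h₁₂ ((hM₁.le_iff_eq hM₂.1).1 hle).symm
  obtain ⟨M₃, hM₃, hay₃⟩ := exists_isCoatom_mem_of_not_isCyclic h (a * y)
  refine ⟨M₁, M₂, M₃, hM₁, hM₂, hM₃, h₁₂, ?_, ?_⟩
  · rintro rfl
    exact hy₁ ((M₁.mul_mem_cancel_left ha₁).1 hay₃)
  · rintro rfl
    exact ha₂ ((M₂.mul_mem_cancel_right hy₂).1 hay₃)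

theorem not_isStarCenter_comaxAdj [Group.IsNilpotent G] (h : ¬ IsCyclic G) (H : Subgroup G) :
    ¬ IsStarCenter comaxAdj H := fun hH => by
  obtain ⟨M₁, M₂, M₃, hM₁, hM₂, hM₃, h₁₂, h₁₃, h₂₃⟩ := exists_three_isCoatom_of_not_isCyclic h
  exact hH.not_triangle comaxAdj_irrefl (comaxAdj_of_isCoatom hM₁ hM₂ h₁₂)
    (comaxAdj_of_isCoatom hM₁ hM₃ h₁₃) (comaxAdj_of_isCoatom hM₂ hM₃ h₂₃)

theorem isCyclic_of_natCard_eq_mul [Group.IsNilpotent G] {p q : ℕ} (hp : p.Prime) (hq : q.Prime)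
    (hpq : p ≠ q) (hG : Nat.card G = p * q) : IsCyclic G := by
  have : IsZGroup G := IsZGroup.of_squarefree <| hG ▸
    (Nat.squarefree_mul ((Nat.coprime_primes hp hq).2 hpq)).2
      ⟨hp.prime.squarefree, hq.prime.squarefree⟩
  infer_instance

end Nilpotent

/-- For a finite nilpotent group `G`, the deleted co-maximal subgroup graph
`Γ*(G)` is a star iff `|G| = pq` for distinct primes, or `G` is cyclic of order
`p^r q` with `r ≥ 2` and `p ≠ q` primes. -/
theorem deleted_comaximal_star_iff {G : Type*} [Group G] [Finite G]
    [Group.IsNilpotent G] :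
    (∃ H : Subgroup G, (∃ L, comaxAdj H L) ∧
      (∀ K : Subgroup G, (∃ L, comaxAdj K L) → K ≠ H → comaxAdj H K) ∧
      (∀ K₁ K₂ : Subgroup G, (∃ L, comaxAdj K₁ L) → (∃ L, comaxAdj K₂ L) →
        K₁ ≠ H → K₂ ≠ H → ¬ comaxAdj K₁ K₂) ∧
      (∃ K : Subgroup G, (∃ L, comaxAdj K L) ∧ K ≠ H)) ↔
    ((∃ p q : ℕ, p.Prime ∧ q.Prime ∧ p ≠ q ∧ Nat.card G = p * q) ∨
      (IsCyclic G ∧ ∃ p q r : ℕ, p.Prime ∧ q.Prime ∧ p ≠ q ∧ 2 ≤ r ∧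
        Nat.card G = p ^ r * q)) := by
  rw [exists_congr fun H => isStarCenter_iff (R := comaxAdj) (c := H) comaxAdj.symm comaxAdj_irrefl]
  by_cases hG : IsCyclic G
  · rw [IsCyclic.exists_isStarCenter_comaxAdj_iff, Nat.exists_isStarCenter_lcmAdj_iff]
    constructor
    · rintro ⟨p, q, r, hp, hq, hpq, hr, hn⟩
      obtain rfl | hr := (Nat.one_le_iff_ne_zero.2 hr).eq_or_lt
      · exact Or.inl ⟨p, q, hp, hq, hpq, by rw [hn, pow_one]⟩
      · exact Or.inr ⟨hG, p, q, r, hp, hq, hpq, hr, hn⟩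
    · rintro (⟨p, q, hp, hq, hpq, hn⟩ | ⟨-, p, q, r, hp, hq, hpq, hr, hn⟩)
      · exact ⟨p, q, 1, hp, hq, hpq, one_ne_zero, by rw [hn, pow_one]⟩
      · exact ⟨p, q, r, hp, hq, hpq, by omega, hn⟩
  · refine iff_of_false (fun ⟨H, hH⟩ => not_isStarCenter_comaxAdj hG H hH) ?_
    rintro (⟨p, q, hp, hq, hpq, hn⟩ | ⟨hG', -⟩)
    exacts [hG (isCyclic_of_natCard_eq_mul hp hq hpq hn), hG hG']
end

section
/- Let n ≥ 3 and let G be the dihedral group of order 2^n (with presentation ⟨a, b : a^{2^{n-1}} = b² = e, bab = a^{-1}⟩). Then Γ*(G) has a universal vertex; that is, there exists a non-isolated vertex H of Γ(G) that is adjacent in Γ(G) to every other non-isolated vertex. -/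
open scoped Pointwise

/-!
The rotation subgroup `R` of `D_m` is a universal vertex whenever `ZMod m` is a local ring, i.e.
`m` is a prime power. Any `K ≠ R` containing a reflection satisfies `RK = G`. Conversely a
non-isolated `K ≠ R` must contain a reflection: otherwise `K ≤ R`, and `K` contains no rotation by
a unit (such a rotation generates `R`). Writing the reflections `sr 0` and `sr 1` as products
`r i * l₀` and `r j * l₁` with `r i, r j ∈ K` and `l₀, l₁ ∈ L` forces `l₀ = sr i`, `l₁ = sr (1 + j)`,
so `L` contains the rotation `l₀ * l₁ = r (1 + j - i)`. As `i` and `j` lie in the maximal ideal,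
`1 + j - i` is a unit, whence `L ≥ R` and, containing a reflection, `L = ⊤`.
-/

theorem ZMod.isLocalRing_prime_pow {p d : ℕ} (hp : p.Prime) (hd : 0 < d) :
    IsLocalRing (ZMod (p ^ d)) :=
  haveI : Fact (1 < p ^ d) := ⟨Nat.one_lt_pow hd.ne' hp.one_lt⟩
  IsLocalRing.of_nonunits_add fun a b ha hb => by
    have dvd_val {x : ZMod (p ^ d)} (hx : x ∈ nonunits _) : p ∣ x.val := by
      rwa [mem_nonunits_iff, ← ZMod.natCast_zmod_val x, ZMod.isUnit_natCast_iff_not_dvd_pow hp hd,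
        not_not] at hx
    rw [mem_nonunits_iff, ← ZMod.natCast_zmod_val a, ← ZMod.natCast_zmod_val b, ← Nat.cast_add,
      ZMod.isUnit_natCast_iff_not_dvd_pow hp hd, not_not]
    exact dvd_add (dvd_val ha) (dvd_val hb)

namespace DihedralGroup

open Subgroup

variable {m : ℕ}

def rotations (m : ℕ) : Subgroup (DihedralGroup m) where
  carrier := Set.range r
  one_mem' := ⟨0, r_zero⟩
  mul_mem' := by rintro _ _ ⟨i, rfl⟩ ⟨j, rfl⟩; exact ⟨i + j, (r_mul_r i j).symm⟩
  inv_mem' := by rintro _ ⟨i, rfl⟩; exact ⟨-i, (inv_r i).symm⟩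

theorem r_mem_rotations (i : ZMod m) : r i ∈ rotations m := ⟨i, rfl⟩

theorem sr_notMem_rotations (i : ZMod m) : sr i ∉ rotations m := by
  rintro ⟨j, hj⟩
  cases hj

theorem rotations_ne_bot [Nontrivial (ZMod m)] : rotations m ≠ ⊥ := fun h => by
  have := h ▸ r_mem_rotations (1 : ZMod m)
  rw [mem_bot, one_def, r.injEq] at this
  exact one_ne_zero this

theorem rotations_ne_top : rotations m ≠ ⊤ :=
  fun h => sr_notMem_rotations (0 : ZMod m) (h ▸ mem_top _)

theorem le_rotations_of_forall_sr_notMem {K : Subgroup (DihedralGroup m)}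
    (hK : ∀ j, sr j ∉ K) : K ≤ rotations m := by
  rintro (i | j) hg
  · exact r_mem_rotations i
  · exact absurd hg (hK j)

theorem rotations_le_of_r_mem {K : Subgroup (DihedralGroup m)} {u : ZMod m} (hu : IsUnit u)
    (h : r u ∈ K) : rotations m ≤ K := by
  rintro _ ⟨i, rfl⟩
  obtain ⟨k, hk⟩ := ZMod.intCast_surjective (hu.unit⁻¹ * i : ZMod m)
  have : r u ^ k = r i := by rw [r_zpow, hk, ← mul_assoc, IsUnit.mul_val_inv, one_mul]
  exact this ▸ K.zpow_mem h k

theorem eq_top_of_rotations_le {L : Subgroup (DihedralGroup m)} (hL : rotations m ≤ L)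
    {j : ZMod m} (hj : sr j ∈ L) : L = ⊤ := by
  refine (eq_top_iff' L).mpr fun g => ?_
  rcases g with i | i
  · exact hL (r_mem_rotations i)
  · simpa [sr_mul_r] using L.mul_mem hj (hL (r_mem_rotations (i - j)))

theorem rotations_mul_eq_univ {K : Subgroup (DihedralGroup m)} {j : ZMod m} (hj : sr j ∈ K) :
    (rotations m : Set (DihedralGroup m)) * (K : Set (DihedralGroup m)) = Set.univ := by
  refine Set.eq_univ_of_forall fun g => ?_
  rcases g with i | i
  · exact ⟨r i, r_mem_rotations i, 1, K.one_mem, mul_one _⟩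
  · exact ⟨r (j - i), r_mem_rotations _, sr j, hj, (r_mul_sr _ _).trans (by rw [sub_sub_cancel])⟩

theorem comaxAdj_rotations [Nontrivial (ZMod m)] {K : Subgroup (DihedralGroup m)}
    (hK_bot : K ≠ ⊥) (hK_top : K ≠ ⊤) (hK : rotations m ≠ K) {j : ZMod m} (hj : sr j ∈ K) :
    comaxAdj (rotations m) K :=
  ⟨rotations_ne_bot, rotations_ne_top, hK_bot, hK_top, hK, rotations_mul_eq_univ hj⟩

theorem r_notMem_zpowers_sr (i : ZMod m) {j : ZMod m} (hj : j ≠ 0) : r j ∉ zpowers (sr i) := by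
  rintro ⟨k, hk : sr i ^ k = r j⟩
  have hsq : sr i ^ (2 : ℤ) = 1 := by rw [zpow_ofNat, sq, sr_mul_self]
  rcases Int.even_or_odd' k with ⟨c, rfl | rfl⟩
  · rw [zpow_mul, hsq, one_zpow, one_def, r.injEq] at hk
    exact hj hk.symm
  · rw [zpow_add, zpow_mul, hsq, one_zpow, one_mul, zpow_one] at hk
    cases hk

theorem comaxAdj_rotations_zpowers_sr [Nontrivial (ZMod m)] (i : ZMod m) :
    comaxAdj (rotations m) (zpowers (sr i)) := by
  refine comaxAdj_rotations ?_ ?_ ?_ (mem_zpowers (sr i))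
  · simp [one_def, -r_zero]
  · exact fun h => r_notMem_zpowers_sr i one_ne_zero (h ▸ mem_top _)
  · exact fun h => sr_notMem_rotations i (h ▸ mem_zpowers _)

theorem eq_sr_of_r_mul_eq_sr {i j : ZMod m} {g : DihedralGroup m} (h : r i * g = sr j) :
    g = sr (j + i) := by
  rcases g with k | k
  · simp [r_mul_r] at h
  · rw [r_mul_sr, sr.injEq] at h
    rw [← h, sub_add_cancel]

theorem exists_sr_mem_of_mul_eq_univ [IsLocalRing (ZMod m)] {K L : Subgroup (DihedralGroup m)}
    (hK : K ≠ rotations m) (hL : L ≠ ⊤)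
    (h : (K : Set (DihedralGroup m)) * (L : Set (DihedralGroup m)) = Set.univ) :
    ∃ j, sr j ∈ K := by
  by_contra! hsr
  have hK_rot := le_rotations_of_forall_sr_notMem hsr
  have mem_maximalIdeal_of_r_mem {i : ZMod m} (hi : r i ∈ K) :
      i ∈ IsLocalRing.maximalIdeal (ZMod m) := fun hu =>
    hK (le_antisymm hK_rot (rotations_le_of_r_mem hu hi))
  obtain ⟨_, hk₀, l₀, hl₀, h₀⟩ : sr 0 ∈ (K : Set (DihedralGroup m)) * L := h ▸ Set.mem_univ _
  obtain ⟨_, hk₁, l₁, hl₁, h₁⟩ : sr 1 ∈ (K : Set (DihedralGroup m)) * L := h ▸ Set.mem_univ _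
  obtain ⟨i, rfl⟩ := hK_rot hk₀
  obtain ⟨j, rfl⟩ := hK_rot hk₁
  rw [eq_sr_of_r_mul_eq_sr h₀, zero_add] at hl₀
  rw [eq_sr_of_r_mul_eq_sr h₁] at hl₁
  have hunit : IsUnit (1 + j - i) := by
    convert IsLocalRing.isUnit_one_sub_self_of_mem_nonunits _
      (sub_mem (mem_maximalIdeal_of_r_mem hk₀) (mem_maximalIdeal_of_r_mem hk₁)) using 1
    ring
  have hr : r (1 + j - i) ∈ L := by simpa only [sr_mul_sr] using L.mul_mem hl₀ hl₁
  exact hL (eq_top_of_rotations_le (rotations_le_of_r_mem hunit hr) hl₀)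

end DihedralGroup

/-- For `n ≥ 3`, the deleted co-maximal subgroup graph of the dihedral group of
order `2^n` has a universal vertex. -/
theorem dihedral_deleted_comaximal_universal (n : ℕ) (hn : 3 ≤ n) :
    ∃ H : Subgroup (DihedralGroup (2 ^ (n - 1))),
      (∃ L, comaxAdj H L) ∧
      ∀ K : Subgroup (DihedralGroup (2 ^ (n - 1))),
        (∃ L, comaxAdj K L) → K ≠ H → comaxAdj H K := by
  have := ZMod.isLocalRing_prime_pow Nat.prime_two (show 0 < n - 1 by omega)
  refine ⟨DihedralGroup.rotations _, ⟨_, DihedralGroup.comaxAdj_rotations_zpowers_sr 0⟩,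
    fun K ⟨L, hKL⟩ hK => ?_⟩
  obtain ⟨hK_bot, hK_top, -, hL_top, -, hKL⟩ := hKL
  obtain ⟨j, hj⟩ := DihedralGroup.exists_sr_mem_of_mul_eq_univ hK hL_top hKL
  exact DihedralGroup.comaxAdj_rotations hK_bot hK_top hK.symm hj
end

section
/- Let n ≥ 3 and let G be the generalized quaternion group of order 2^n (with presentation ⟨a, b : a^{2^{n-1}} = e, b² = a^{2^{n-2}}, b^{-1}ab = a^{-1}⟩). Then Γ*(G) has a universal vertex; that is, there exists a non-isolated vertex H of Γ(G) that is adjacent in Γ(G) to every other non-isolated vertex. -/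
open scoped Pointwise

section Comaximal

variable {G : Type*} [Group G]

theorem Subgroup.mul_eq_univ_of_index_eq_two {H K : Subgroup G} (hH : H.index = 2)
    (hKH : ¬K ≤ H) : (H : Set G) * (K : Set G) = Set.univ := by
  obtain ⟨k, hkK, hkH⟩ := SetLike.not_le_iff_exists.mp hKH
  refine Set.eq_univ_of_forall fun g => ?_
  by_cases hg : g ∈ H
  · exact ⟨g, hg, 1, K.one_mem, mul_one g⟩
  · refine ⟨g * k⁻¹, ?_, k, hkK, inv_mul_cancel_right g k⟩
    simp [Subgroup.mul_mem_iff_of_index_two hH, hg, hkH]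

theorem comaxAdj_of_index_eq_two {H K : Subgroup G} (hH : H.index = 2) (hKH : ¬K ≤ H)
    (hK : K ≠ ⊤) : comaxAdj H K := by
  have hmul := Subgroup.mul_eq_univ_of_index_eq_two hH hKH
  refine ⟨?_, ?_, ?_, hK, ?_, hmul⟩
  · rintro rfl
    simp [Subgroup.coe_eq_univ, hK] at hmul
  · rintro rfl
    simp at hH
  · rintro rfl
    exact hKH bot_le
  · rintro rfl
    exact hKH le_rfl

theorem comaxAdj_of_index_eq_two_of_exists_comaxAdj {H K : Subgroup G} (hH : H.index = 2)
    (hisolated : ∀ K' < H, ∀ L : Subgroup G, (K' : Set G) * (L : Set G) = Set.univ → L = ⊤)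
    (hK : ∃ L, comaxAdj K L) (hKH : K ≠ H) : comaxAdj H K := by
  obtain ⟨L, -, hKtop, -, hLtop, -, hKL⟩ := hK
  exact comaxAdj_of_index_eq_two hH
    (fun hle => hLtop (hisolated K (lt_of_le_of_ne hle hKH) L hKL)) hKtop

end Comaximal

namespace QuaternionGroup

open Subgroup

variable {m : ℕ}

theorem a_pow (i : ZMod (2 * m)) (k : ℕ) : a i ^ k = a ((k : ZMod (2 * m)) * i) := by
  induction k with
  | zero => rw [pow_zero, Nat.cast_zero, zero_mul, one_def]
  | succ k ih => rw [pow_succ, ih, a_mul_a]; push_cast; ring_nf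

theorem mem_zpowers_a_one [NeZero m] {x : QuaternionGroup m} :
    x ∈ zpowers (a 1) ↔ ∃ i, x = a i := by
  refine ⟨fun hx => ?_, ?_⟩
  · obtain ⟨k, rfl⟩ := mem_powers_iff_mem_zpowers.mpr hx
    exact ⟨k, a_one_pow k⟩
  · rintro ⟨i, rfl⟩
    rw [← ZMod.natCast_zmod_val i, ← a_one_pow]
    exact pow_mem (mem_zpowers _) _

theorem index_zpowers_a_one [NeZero m] : (zpowers (a 1 : QuaternionGroup m)).index = 2 := by
  have h := (zpowers (a 1 : QuaternionGroup m)).index_mul_card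
  rw [Nat.card_zpowers, orderOf_a_one, Nat.card_eq_fintype_card, card] at h
  have hm : 0 < m := Nat.pos_of_neZero m
  nlinarith

theorem zpowers_a_one_le_of_isUnit [NeZero m] {K : Subgroup (QuaternionGroup m)}
    {j : ZMod (2 * m)} (hj : a j ∈ K) (hu : IsUnit j) : zpowers (a 1) ≤ K := by
  obtain ⟨u, rfl⟩ := hu
  rw [zpowers_le]
  have : a (u : ZMod (2 * m)) ^ (↑u⁻¹ : ZMod (2 * m)).val = a 1 := by
    rw [a_pow, ZMod.natCast_zmod_val, Units.inv_mul]
  exact this ▸ pow_mem hj _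

theorem eq_top_of_lt_zpowers_a_one_of_mul_eq_univ [NeZero m] [IsLocalRing (ZMod (2 * m))]
    {K L : Subgroup (QuaternionGroup m)} (hK : K < zpowers (a 1))
    (hKL : (K : Set (QuaternionGroup m)) * (L : Set (QuaternionGroup m)) = Set.univ) : L = ⊤ := by
  obtain ⟨k, hk, y, hy, hky⟩ := Set.mem_mul.mp (hKL ▸ Set.mem_univ (a 1))
  obtain ⟨j, rfl⟩ := mem_zpowers_a_one.mp (hK.le hk)
  have hj : ¬IsUnit j := fun hu => hK.not_ge (zpowers_a_one_le_of_isUnit hk hu)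
  have hy' : y = a (1 - j) := by
    rw [eq_inv_mul_of_mul_eq hky]
    exact congrArg a (by ring)
  have hHL : zpowers (a 1) ≤ L :=
    zpowers_a_one_le_of_isUnit (hy' ▸ hy) (IsLocalRing.isUnit_one_sub_self_of_mem_nonunits j hj)
  refine eq_top_iff.mpr fun g _ => ?_
  obtain ⟨k', hk', y', hy', rfl⟩ := Set.mem_mul.mp (hKL ▸ Set.mem_univ g)
  exact L.mul_mem (hHL (hK.le hk')) hy'

theorem xa_notMem_zpowers_a_one [NeZero m] (i : ZMod (2 * m)) :
    xa i ∉ zpowers (a 1 : QuaternionGroup m) := by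
  simp [mem_zpowers_a_one]

theorem zpowers_xa_ne_top [NeZero m] (hm : m ≠ 1) (i : ZMod (2 * m)) :
    zpowers (xa i : QuaternionGroup m) ≠ ⊤ := by
  intro h
  have hcard := Nat.card_zpowers (xa i : QuaternionGroup m)
  rw [h, card_top, orderOf_xa, Nat.card_eq_fintype_card, card] at hcard
  omega

end QuaternionGroup

open QuaternionGroup Subgroup in
/-- For `n ≥ 3`, the deleted co-maximal subgroup graph of the generalized
quaternion group of order `2^n` has a universal vertex. -/
theorem quaternion_deleted_comaximal_universal (n : ℕ) (hn : 3 ≤ n) :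
    ∃ H : Subgroup (QuaternionGroup (2 ^ (n - 2))),
      (∃ L, comaxAdj H L) ∧
      ∀ K : Subgroup (QuaternionGroup (2 ^ (n - 2))),
        (∃ L, comaxAdj K L) → K ≠ H → comaxAdj H K := by
  have : NeZero (2 ^ (n - 2)) := ⟨pow_ne_zero _ two_ne_zero⟩
  have : IsLocalRing (ZMod (2 * 2 ^ (n - 2))) := by
    rw [← pow_succ']
    exact ZMod.isLocalRing_prime_pow Nat.prime_two (Nat.succ_pos _)
  have hm : 2 ^ (n - 2) ≠ 1 := (Nat.one_lt_pow (by omega) one_lt_two).ne'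
  refine ⟨zpowers (a 1), ⟨zpowers (xa 0), ?_⟩, fun K hK hKH => ?_⟩
  · exact comaxAdj_of_index_eq_two index_zpowers_a_one
      (fun h => xa_notMem_zpowers_a_one 0 (h (mem_zpowers _))) (zpowers_xa_ne_top hm 0)
  · exact comaxAdj_of_index_eq_two_of_exists_comaxAdj index_zpowers_a_one
      (fun _ hK' _ hKL => eq_top_of_lt_zpowers_a_one_of_mul_eq_univ hK' hKL) hK hKH
end

section
/- Let p be a prime, let n ≥ 2, and let G = Z_{p^{n-1}} × Z_p. Then Γ*(G) has a universal vertex; that is, there exists a non-isolated vertex H of Γ(G) (namely the subgroup Z_{p^{n-1}} × {0}) that is adjacent in Γ(G) to every other non-isolated vertex. -/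
open scoped Pointwise

lemma mem_toSubgroup' {A : Type*} [AddGroup A] (S : AddSubgroup A)
    (x : Multiplicative A) : x ∈ AddSubgroup.toSubgroup S ↔ Multiplicative.toAdd x ∈ S :=
  Iff.rfl

lemma exists_nsmul_eq' {m : ℕ} [NeZero m] {a : ZMod m} (ha : IsUnit a) (x : ZMod m) :
    ∃ c : ℕ, c • a = x := by
  obtain ⟨u, hu⟩ := ha
  refine ⟨(x * ↑u⁻¹).val, ?_⟩
  rw [nsmul_eq_mul, ZMod.natCast_val, ZMod.cast_id, ← hu, Units.inv_mul_cancel_right]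

lemma isUnit_of_not_dvd' {p : ℕ} (hp : p.Prime) (k : ℕ) [NeZero (p ^ k)]
    {a : ZMod (p ^ k)} (ha : ¬ (p ∣ a.val)) : IsUnit a := by
  have : IsUnit ((a.val : ZMod (p ^ k))) := by
    rw [ZMod.isUnit_iff_coprime]
    exact ((hp.coprime_iff_not_dvd.mpr ha).symm.pow_right k)
  rwa [ZMod.natCast_val, ZMod.cast_id] at this

/-- For a prime `p` and `n ≥ 2`, the subgroup `Z_{p^{n-1}} × {0}` of
`G = Z_{p^{n-1}} × Z_p` is a universal vertex of `Γ*(G)`. -/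
theorem zmod_prod_deleted_comaximal_universal (p : ℕ) (hp : p.Prime) (n : ℕ)
    (hn : 2 ≤ n) :
    (∃ L, comaxAdj (AddSubgroup.toSubgroup
        ((⊤ : AddSubgroup (ZMod (p ^ (n - 1)))).prod (⊥ : AddSubgroup (ZMod p)))) L) ∧
    ∀ K : Subgroup (Multiplicative (ZMod (p ^ (n - 1)) × ZMod p)),
      (∃ L, comaxAdj K L) →
      K ≠ AddSubgroup.toSubgroup
        ((⊤ : AddSubgroup (ZMod (p ^ (n - 1)))).prod (⊥ : AddSubgroup (ZMod p))) →
      comaxAdj (AddSubgroup.toSubgroup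
        ((⊤ : AddSubgroup (ZMod (p ^ (n - 1)))).prod (⊥ : AddSubgroup (ZMod p)))) K := by
  haveI : Fact p.Prime := ⟨hp⟩
  haveI : Fact (1 < p ^ (n - 1)) := ⟨Nat.one_lt_pow (by omega) hp.one_lt⟩
  set m := p ^ (n - 1) with hm
  set G := Multiplicative (ZMod m × ZMod p) with hG
  set H : Subgroup G := AddSubgroup.toSubgroup
      ((⊤ : AddSubgroup (ZMod m)).prod (⊥ : AddSubgroup (ZMod p))) with hH
  -- membership in H
  have memH : ∀ x : G, x ∈ H ↔ (Multiplicative.toAdd x).2 = 0 := by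
    intro x
    rw [hH, mem_toSubgroup', AddSubgroup.mem_prod, AddSubgroup.mem_bot]
    simp
  -- H is nontrivial
  have hHbot : H ≠ ⊥ := by
    intro h
    have h1 : Multiplicative.ofAdd ((1 : ZMod m), (0 : ZMod p)) ∈ H := by
      exact (memH _).mpr rfl
    rw [h, Subgroup.mem_bot] at h1
    have := congrArg (fun z => (Multiplicative.toAdd z).1) h1
    simpa using this
  have hHtop : H ≠ ⊤ := by
    intro h
    have h1 : Multiplicative.ofAdd ((0 : ZMod m), (1 : ZMod p)) ∈ H := h ▸ Subgroup.mem_top _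
    rw [memH] at h1
    simpa using h1
  -- key: if K contains an element with nonzero second coordinate then H * K = univ
  have key : ∀ K : Subgroup G, ∀ k ∈ K, (Multiplicative.toAdd k).2 ≠ 0 →
      (H : Set G) * (K : Set G) = Set.univ := by
    intro K k hk hb
    apply Set.eq_univ_iff_forall.mpr
    intro g
    rw [Set.mem_mul]
    set c : ℕ := ((Multiplicative.toAdd g).2 * ((Multiplicative.toAdd k).2)⁻¹).val with hc
    refine ⟨g * (k ^ c)⁻¹, ?_, k ^ c, K.pow_mem hk c, by group⟩
    rw [SetLike.mem_coe, memH]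
    have : (c : ZMod p) = (Multiplicative.toAdd g).2 * ((Multiplicative.toAdd k).2)⁻¹ := by
      rw [hc, ZMod.natCast_val, ZMod.cast_id]
    rw [toAdd_mul, toAdd_inv, toAdd_pow]
    show (Multiplicative.toAdd g).2 + -(c • (Multiplicative.toAdd k).2) = 0
    rw [nsmul_eq_mul, this, inv_mul_cancel_right₀ hb]
    ring
  -- key2: if L contains an element with unit first coord and zero second coord then H ≤ L
  have key2 : ∀ L : Subgroup G, ∀ l ∈ L, (Multiplicative.toAdd l).2 = 0 →
      IsUnit (Multiplicative.toAdd l).1 → H ≤ L := by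
    intro L l hl h0 hu
    intro x hx
    rw [memH] at hx
    obtain ⟨c, hc⟩ := exists_nsmul_eq' hu (Multiplicative.toAdd x).1
    have : l ^ c = x := by
      apply Multiplicative.toAdd.injective
      rw [toAdd_pow]
      ext
      · simpa using hc
      · simp [h0, hx]
    exact this ▸ L.pow_mem hl c
  constructor
  · -- H is non-isolated: adjacent to L = ⊥ × ⊤
    set L : Subgroup G := AddSubgroup.toSubgroup
        ((⊥ : AddSubgroup (ZMod m)).prod (⊤ : AddSubgroup (ZMod p))) with hL
    have memL : ∀ x : G, x ∈ L ↔ (Multiplicative.toAdd x).1 = 0 := by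
      intro x
      rw [hL, mem_toSubgroup', AddSubgroup.mem_prod, AddSubgroup.mem_bot]
      simp
    have hLmem : Multiplicative.ofAdd ((0 : ZMod m), (1 : ZMod p)) ∈ L := (memL _).mpr rfl
    refine ⟨L, hHbot, hHtop, ?_, ?_, ?_, ?_⟩
    · intro h
      rw [h, Subgroup.mem_bot] at hLmem
      have := congrArg (fun z => (Multiplicative.toAdd z).2) hLmem
      simpa using this
    · intro h
      have h1 : Multiplicative.ofAdd ((1 : ZMod m), (0 : ZMod p)) ∈ L := h ▸ Subgroup.mem_top _
      rw [memL] at h1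
      simpa using h1
    · intro h
      have h1 : Multiplicative.ofAdd ((1 : ZMod m), (0 : ZMod p)) ∈ H := (memH _).mpr rfl
      rw [h, memL] at h1
      simpa using h1
    · exact key L _ hLmem (by simp)
  · -- universality
    rintro K ⟨L, hKbot, hKtop, hLbot, hLtop, hKL, hmul⟩ hne
    refine ⟨hHbot, hHtop, hKbot, hKtop, hne.symm, ?_⟩
    by_cases h1 : ∃ k ∈ K, (Multiplicative.toAdd k).2 ≠ 0
    · obtain ⟨k, hk, hb⟩ := h1
      exact key K k hk hb
    · push_neg at h1
      by_cases h2 : ∃ k ∈ K, ¬ (p ∣ ((Multiplicative.toAdd k).1).val)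
      · -- then K = H, contradiction
        exfalso
        obtain ⟨k, hk, ha⟩ := h2
        apply hne
        apply le_antisymm
        · intro x hx
          rw [memH]
          exact h1 x hx
        · exact key2 K k hk (h1 k hk) (isUnit_of_not_dvd' hp (n - 1) ha)
      · -- K ≤ Frattini, so L = ⊤, contradiction
        exfalso
        push_neg at h2
        apply hLtop
        -- get that L contains an element with unit first coord and zero second coord
        have hg1 : Multiplicative.ofAdd ((1 : ZMod m), (0 : ZMod p)) ∈
            (K : Set G) * (L : Set G) := by rw [hmul]; trivial
        rw [Set.mem_mul] at hg1
        obtain ⟨k, hk, l, hl, hkl⟩ := hg1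
        have hk2 : (Multiplicative.toAdd k).2 = 0 := h1 k hk
        have hl2 : (Multiplicative.toAdd l).2 = 0 := by
          have := congrArg (fun z => (Multiplicative.toAdd z).2) hkl
          simp only [toAdd_mul, Prod.snd_add] at this
          rw [hk2, zero_add] at this
          simpa using this
        have hl1 : IsUnit (Multiplicative.toAdd l).1 := by
          apply isUnit_of_not_dvd' hp (n - 1)
          intro hdvd
          have hka : (p : ℕ) ∣ ((Multiplicative.toAdd k).1).val := h2 k hk
          have hsum : (Multiplicative.toAdd k).1 + (Multiplicative.toAdd l).1 = 1 := by
            have := congrArg (fun z => (Multiplicative.toAdd z).1) hkl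
            simpa using this
          have hcast : ∀ a : ZMod m, p ∣ a.val → (ZMod.castHom (dvd_pow_self p
              (by omega : n - 1 ≠ 0) : p ∣ m) (ZMod p)) a = 0 := by
            intro a hdvd
            rw [ZMod.castHom_apply, ← ZMod.natCast_val, ZMod.natCast_eq_zero_iff]
            exact hdvd
          have := congrArg (ZMod.castHom (dvd_pow_self p (by omega : n - 1 ≠ 0) : p ∣ m)
              (ZMod p)) hsum
          rw [map_add, hcast _ hka, hcast _ hdvd, map_one, add_zero] at this
          exact one_ne_zero this.symm
        have hHL : H ≤ L := key2 L l hl hl2 hl1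
        -- now show (0,1) ∈ L
        have hg2 : Multiplicative.ofAdd ((0 : ZMod m), (1 : ZMod p)) ∈
            (K : Set G) * (L : Set G) := by rw [hmul]; trivial
        rw [Set.mem_mul] at hg2
        obtain ⟨k', hk', l', hl', hkl'⟩ := hg2
        have h01 : Multiplicative.ofAdd ((0 : ZMod m), (1 : ZMod p)) ∈ L := by
          rw [← hkl']
          refine Subgroup.mul_mem _ (hHL ?_) hl'
          rw [memH]
          exact h1 k' hk'
        -- conclude L = ⊤
        rw [eq_top_iff]
        intro g _
        have : (Multiplicative.ofAdd ((Multiplicative.toAdd g).1, (0 : ZMod p))) *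
            (Multiplicative.ofAdd ((0 : ZMod m), (1 : ZMod p))) ^
              ((Multiplicative.toAdd g).2).val = g := by
          apply Multiplicative.toAdd.injective
          rw [toAdd_mul, toAdd_pow]
          ext
          · simp
          · simp [ZMod.natCast_val, ZMod.cast_id]
        rw [← this]
        exact Subgroup.mul_mem _ (hHL ((memH _).mpr rfl)) (L.pow_mem h01 _)
end

section
/- Let G be a finite nilpotent group having at least three distinct maximal subgroups. Then Γ(G) contains a triangle: there exist three non-trivial proper subgroups M₁, M₂, M₃ of G, pairwise distinct, with M₁M₂ = M₂M₃ = M₃M₁ = G. In particular, the girth of Γ(G) equals 3. -/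
open scoped Pointwise

/-! In a nilpotent group every maximal subgroup is normal, so for distinct maximal subgroups
`M`, `N` the product set `MN` is the subgroup `M ⊔ N = G`. Three distinct maximal subgroups
are therefore pairwise adjacent in `Γ(G)`, and a triangle forces girth `3`. -/

theorem IsCoatom.ne_bot_of_ne {α : Type*} [PartialOrder α] [BoundedOrder α] {a b : α}
    (ha : IsCoatom a) (hb : IsCoatom b) (hab : a ≠ b) : a ≠ ⊥ := by
  rintro rfl
  exact hb.1 (ha.2 b (bot_lt_iff_ne_bot.2 hab.symm))

theorem SimpleGraph.egirth_eq_three_of_adj {V : Type*} {Γ : SimpleGraph V} {a b c : V}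
    (hab : Γ.Adj a b) (hac : Γ.Adj a c) (hbc : Γ.Adj b c) : Γ.egirth = 3 := by
  classical
  have hclique : ¬Γ.CliqueFree 3 := fun h =>
    h {a, b, c} (is3Clique_triple_iff.2 ⟨hab, hac, hbc⟩)
  refine le_antisymm ?_ three_le_egirth
  calc Γ.egirth ≤ (completeGraph (Fin 3)).egirth :=
        ((not_cliqueFree_iff_top_isContained 3).1 hclique).egirth_le
    _ = 3 := egirth_top (by simp)

namespace Subgroup

variable {G : Type*} [Group G] [Group.IsNilpotent G]

theorem normal_of_isCoatom {N : Subgroup G} (hN : IsCoatom N) : N.Normal :=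
  NormalizerCondition.normal_of_coatom N Group.normalizerCondition_of_isNilpotent hN

theorem coe_mul_coe_eq_univ_of_isCoatom {M N : Subgroup G} (hM : IsCoatom M) (hN : IsCoatom N)
    (hne : M ≠ N) : (M : Set G) * (N : Set G) = Set.univ := by
  have := normal_of_isCoatom hN
  rw [← mul_normal, hM.sup_eq_top_of_ne hN hne, coe_top]

end Subgroup

theorem comaximal_girth_three_of_three_maximal_general {G : Type*} [Group G]
    [Group.IsNilpotent G]
    (h3 : ∃ M₁ M₂ M₃ : Subgroup G, IsCoatom M₁ ∧ IsCoatom M₂ ∧ IsCoatom M₃ ∧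
      M₁ ≠ M₂ ∧ M₂ ≠ M₃ ∧ M₁ ≠ M₃) :
    (∃ M₁ M₂ M₃ : Subgroup G,
      (M₁ ≠ ⊥ ∧ M₁ ≠ ⊤) ∧ (M₂ ≠ ⊥ ∧ M₂ ≠ ⊤) ∧ (M₃ ≠ ⊥ ∧ M₃ ≠ ⊤) ∧
      M₁ ≠ M₂ ∧ M₂ ≠ M₃ ∧ M₁ ≠ M₃ ∧
      (M₁ : Set G) * (M₂ : Set G) = Set.univ ∧
      (M₂ : Set G) * (M₃ : Set G) = Set.univ ∧
      (M₃ : Set G) * (M₁ : Set G) = Set.univ) ∧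
    (comaximalGraph G).egirth = 3 := by
  obtain ⟨M₁, M₂, M₃, h₁, h₂, h₃, h₁₂, h₂₃, h₁₃⟩ := h3
  have hv₁ : M₁ ≠ ⊥ ∧ M₁ ≠ ⊤ := ⟨h₁.ne_bot_of_ne h₂ h₁₂, h₁.1⟩
  have hv₂ : M₂ ≠ ⊥ ∧ M₂ ≠ ⊤ := ⟨h₂.ne_bot_of_ne h₃ h₂₃, h₂.1⟩
  have hv₃ : M₃ ≠ ⊥ ∧ M₃ ≠ ⊤ := ⟨h₃.ne_bot_of_ne h₁ h₁₃.symm, h₃.1⟩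
  have p₁₂ := Subgroup.coe_mul_coe_eq_univ_of_isCoatom h₁ h₂ h₁₂
  have p₁₃ := Subgroup.coe_mul_coe_eq_univ_of_isCoatom h₁ h₃ h₁₃
  have p₂₃ := Subgroup.coe_mul_coe_eq_univ_of_isCoatom h₂ h₃ h₂₃
  have p₃₁ := Subgroup.coe_mul_coe_eq_univ_of_isCoatom h₃ h₁ h₁₃.symm
  refine ⟨⟨M₁, M₂, M₃, hv₁, hv₂, hv₃, h₁₂, h₂₃, h₁₃, p₁₂, p₂₃, p₃₁⟩, ?_⟩
  exact SimpleGraph.egirth_eq_three_of_adj (a := ⟨M₁, hv₁⟩) (b := ⟨M₂, hv₂⟩) (c := ⟨M₃, hv₃⟩)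
    ⟨Subtype.coe_ne_coe.1 h₁₂, p₁₂⟩ ⟨Subtype.coe_ne_coe.1 h₁₃, p₁₃⟩
    ⟨Subtype.coe_ne_coe.1 h₂₃, p₂₃⟩

/-- A finite nilpotent group with at least three distinct maximal subgroups has
a triangle in `Γ(G)`; in particular the girth of `Γ(G)` is `3`. -/
theorem comaximal_girth_three_of_three_maximal {G : Type*} [Group G] [Finite G]
    [Group.IsNilpotent G]
    (h3 : ∃ M₁ M₂ M₃ : Subgroup G, IsCoatom M₁ ∧ IsCoatom M₂ ∧ IsCoatom M₃ ∧
      M₁ ≠ M₂ ∧ M₂ ≠ M₃ ∧ M₁ ≠ M₃) :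
    (∃ M₁ M₂ M₃ : Subgroup G,
      (M₁ ≠ ⊥ ∧ M₁ ≠ ⊤) ∧ (M₂ ≠ ⊥ ∧ M₂ ≠ ⊤) ∧ (M₃ ≠ ⊥ ∧ M₃ ≠ ⊤) ∧
      M₁ ≠ M₂ ∧ M₂ ≠ M₃ ∧ M₁ ≠ M₃ ∧
      (M₁ : Set G) * (M₂ : Set G) = Set.univ ∧
      (M₂ : Set G) * (M₃ : Set G) = Set.univ ∧
      (M₃ : Set G) * (M₁ : Set G) = Set.univ) ∧
    (comaximalGraph G).egirth = 3 :=
  comaximal_girth_three_of_three_maximal_general h3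
end

section
/- Let p and q be distinct primes and let a, b ≥ 2 be integers. Then the girth of Γ(Z_{p^a q^b}) equals 4, where Z_{p^a q^b} is the cyclic group of order p^a q^b. -/
open scoped Pointwise

/-! In an abelian group `HK = H ⊔ K`. In a cyclic group of order `n`, a generator is a product
of elements of `H` and `K`, so `H ⊔ K = G` forces `n ∣ lcm |H| |K|`; conversely `|H ⊔ K|` is
divisible by `|H|` and `|K|`. For `n = p^a q^b` this makes `H` and `K` adjacent exactly when each
of `p^a`, `q^b` divides `|H|` or `|K|`, while a proper subgroup has order divisible by at most one
of them. Hence among three proper subgroups two miss the same prime power: there is no triangle.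
The subgroups of orders `p^a, q^b, p^a q, p q^b` form a 4-cycle, the last two being proper
because `a, b ≥ 2`. -/

open Subgroup

theorem Nat.Prime.pow_dvd_or_pow_dvd_of_pow_dvd_lcm {p k m n : ℕ} (hp : p.Prime) (hm : m ≠ 0)
    (hn : n ≠ 0) (h : p ^ k ∣ m.lcm n) : p ^ k ∣ m ∨ p ^ k ∣ n := by
  simp only [hp.pow_dvd_iff_le_factorization hm, hp.pow_dvd_iff_le_factorization hn,
    hp.pow_dvd_iff_le_factorization (Nat.lcm_ne_zero hm hn), Nat.factorization_lcm hm hn,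
    Finsupp.sup_apply] at h ⊢
  exact le_sup_iff.mp h

namespace SimpleGraph

variable {V : Type*} {G : SimpleGraph V}

theorem CliqueFree.four_le_egirth (h : G.CliqueFree 3) : 4 ≤ G.egirth := by
  classical
  refine le_egirth.mpr fun u w hw => ?_
  by_contra! hlt
  have hlen : w.length = 3 := by
    have := hw.three_le_length
    norm_cast at hlt
    omega
  have h01 := w.adj_getVert_succ (i := 0) (by omega)
  have h12 := w.adj_getVert_succ (i := 1) (by omega)
  have h20 := w.adj_getVert_succ (i := 2) (by omega)
  rw [w.getVert_zero] at h01
  rw [show 2 + 1 = w.length by omega, w.getVert_length] at h20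
  exact h {u, w.getVert 1, w.getVert 2} (is3Clique_triple_iff.mpr ⟨h01, h20.symm, h12⟩)

theorem egirth_le_four {a b c d : V} (hab : G.Adj a b) (hbc : G.Adj b c) (hcd : G.Adj c d)
    (hda : G.Adj d a) (hac : a ≠ c) (hbd : b ≠ d) : G.egirth ≤ 4 := by
  let w : G.Walk a a := .cons hab (.cons hbc (.cons hcd (.cons hda .nil)))
  have hw : w.IsCycle := by
    simp [w, Walk.cons_isCycle_iff, hab.ne, hbc.ne, hcd.ne, hda.ne, hab.ne.symm, hda.ne.symm,
      hac, hac.symm, hbd]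
  exact egirth_le_length hw

end SimpleGraph

theorem comaximalGraph_adj_iff {G : Type*} [CommGroup G]
    {H K : {H : Subgroup G // H ≠ ⊥ ∧ H ≠ ⊤}} :
    (comaximalGraph G).Adj H K ↔ H.1 ⊔ K.1 = ⊤ := by
  change H ≠ K ∧ _ ↔ _
  rw [← mul_normal, coe_eq_univ]
  refine ⟨And.right, fun h => ⟨?_, h⟩⟩
  rintro rfl
  exact H.2.2 (sup_idem H.1 ▸ h)

section CyclicGroup

variable {G : Type*} [CommGroup G] [IsCyclic G]

theorem IsCyclic.card_dvd_lcm_of_sup_eq_top {H K : Subgroup G} (h : H ⊔ K = ⊤) :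
    Nat.card G ∣ (Nat.card H).lcm (Nat.card K) := by
  obtain ⟨g, hg⟩ := IsCyclic.exists_ofOrder_eq_natCard (α := G)
  obtain ⟨x, hx, y, hy, rfl⟩ := mem_sup.mp (h ▸ mem_top g)
  rw [← hg]
  exact ((Commute.all x y).orderOf_mul_dvd_lcm).trans
    (Nat.lcm_dvd ((H.orderOf_dvd_natCard hx).trans (Nat.dvd_lcm_left _ _))
      ((K.orderOf_dvd_natCard hy).trans (Nat.dvd_lcm_right _ _)))

theorem IsCyclic.pow_dvd_card_or_of_sup_eq_top [Finite G] {p k : ℕ} (hp : p.Prime)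
    (hpk : p ^ k ∣ Nat.card G)
    {H K : Subgroup G} (h : H ⊔ K = ⊤) : p ^ k ∣ Nat.card H ∨ p ^ k ∣ Nat.card K :=
  hp.pow_dvd_or_pow_dvd_of_pow_dvd_lcm Nat.card_pos.ne' Nat.card_pos.ne'
    (hpk.trans (card_dvd_lcm_of_sup_eq_top h))

theorem IsCyclic.exists_card_eq [Finite G] {d : ℕ} (hd : d ∣ Nat.card G) :
    ∃ H : Subgroup G, Nat.card H = d := by
  obtain ⟨g, hg⟩ := IsCyclic.exists_ofOrder_eq_natCard (α := G)
  refine ⟨zpowers (g ^ (orderOf g / d)), ?_⟩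
  rw [Nat.card_zpowers, orderOf_pow_orderOf_div (hg ▸ Nat.card_pos.ne') (hg ▸ hd)]

end CyclicGroup

section CoprimeFactorization

variable {G : Type*} [Group G] [Finite G] {m n : ℕ}

theorem Subgroup.ne_bot_and_ne_top_of_card {H : Subgroup G} (h1 : 1 < Nat.card H)
    (h2 : Nat.card H < Nat.card G) : H ≠ ⊥ ∧ H ≠ ⊤ :=
  ⟨(one_lt_card_iff_ne_bot H).mp h1, by rintro rfl; exact (card_top (G := G) ▸ h2).false⟩

theorem Subgroup.eq_top_of_dvd_card_of_dvd_card (hmn : m.Coprime n) (hG : Nat.card G = m * n)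
    {H : Subgroup G} (hm : m ∣ Nat.card H) (hn : n ∣ Nat.card H) : H = ⊤ :=
  H.eq_top_of_card_eq <| Nat.dvd_antisymm H.card_subgroup_dvd_card <|
    hG ▸ hmn.mul_dvd_of_dvd_of_dvd hm hn

theorem Subgroup.sup_eq_top_of_dvd_card (hmn : m.Coprime n) (hG : Nat.card G = m * n)
    {H K : Subgroup G} (hm : m ∣ Nat.card H ∨ m ∣ Nat.card K)
    (hn : n ∣ Nat.card H ∨ n ∣ Nat.card K) : H ⊔ K = ⊤ := by
  have hH := card_dvd_of_le (le_sup_left : H ≤ H ⊔ K)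
  have hK := card_dvd_of_le (le_sup_right : K ≤ H ⊔ K)
  exact eq_top_of_dvd_card_of_dvd_card hmn hG (hm.elim (·.trans hH) (·.trans hK))
    (hn.elim (·.trans hH) (·.trans hK))

end CoprimeFactorization

section TwoPrimes

variable {G : Type*} [CommGroup G] [IsCyclic G] [Finite G] {p q a b : ℕ}
  (hp : p.Prime) (hq : q.Prime) (hpq : p ≠ q) (hG : Nat.card G = p ^ a * q ^ b)
include hp hq hpq hG

theorem IsCyclic.sup_eq_top_iff_of_card_eq_pow_mul_pow {H K : Subgroup G} :
    H ⊔ K = ⊤ ↔ (p ^ a ∣ Nat.card H ∨ p ^ a ∣ Nat.card K) ∧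
      (q ^ b ∣ Nat.card H ∨ q ^ b ∣ Nat.card K) := by
  refine ⟨fun h => ⟨pow_dvd_card_or_of_sup_eq_top hp (hG ▸ dvd_mul_right _ _) h,
    pow_dvd_card_or_of_sup_eq_top hq (hG ▸ dvd_mul_left _ _) h⟩, fun h => ?_⟩
  exact sup_eq_top_of_dvd_card (((Nat.coprime_primes hp hq).mpr hpq).pow a b) hG h.1 h.2

theorem comaximalGraph_cliqueFree_three : (comaximalGraph G).CliqueFree 3 := by
  classical
  intro s hs
  obtain ⟨H, K, L, hHK, hHL, hKL, rfl⟩ := SimpleGraph.is3Clique_iff.mp hs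
  simp only [comaximalGraph_adj_iff, IsCyclic.sup_eq_top_iff_of_card_eq_pow_mul_pow hp hq hpq hG]
    at hHK hHL hKL
  have hcop := ((Nat.coprime_primes hp hq).mpr hpq).pow a b
  have proper (M : {M : Subgroup G // M ≠ ⊥ ∧ M ≠ ⊤}) :
      ¬ (p ^ a ∣ Nat.card M.1 ∧ q ^ b ∣ Nat.card M.1) := fun h =>
    M.2.2 (eq_top_of_dvd_card_of_dvd_card hcop hG h.1 h.2)
  have := proper H
  have := proper K
  have := proper L
  tauto

theorem comaximalGraph_egirth_le_four (ha : 2 ≤ a) (hb : 2 ≤ b) :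
    (comaximalGraph G).egirth ≤ 4 := by
  obtain ⟨A, hA⟩ := IsCyclic.exists_card_eq (G := G) (hG ▸ dvd_mul_right (p ^ a) (q ^ b))
  obtain ⟨B, hB⟩ := IsCyclic.exists_card_eq (G := G) (hG ▸ dvd_mul_left (q ^ b) (p ^ a))
  obtain ⟨C, hC⟩ := IsCyclic.exists_card_eq (G := G)
    (hG ▸ mul_dvd_mul_left (p ^ a) (dvd_pow_self q (by omega)))
  obtain ⟨D, hD⟩ := IsCyclic.exists_card_eq (G := G)
    (hG ▸ mul_dvd_mul_right (dvd_pow_self p (by omega)) (q ^ b))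
  have vertex {H : Subgroup G} {d : ℕ} (hH : Nat.card H = d) (h1 : 1 < d)
      (h2 : d < p ^ a * q ^ b) : H ≠ ⊥ ∧ H ≠ ⊤ :=
    ne_bot_and_ne_top_of_card (hH ▸ h1) (hH ▸ hG ▸ h2)
  have hA1 : 1 < p ^ a := Nat.one_lt_pow (by omega) hp.one_lt
  have hAC : p ^ a < p ^ a * q := (Nat.lt_mul_iff_one_lt_right (by omega)).mpr hq.one_lt
  have hCG : p ^ a * q < p ^ a * q ^ b :=
    (Nat.mul_lt_mul_left (by omega)).mpr (lt_self_pow₀ hq.one_lt hb)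
  have hB1 : 1 < q ^ b := Nat.one_lt_pow (by omega) hq.one_lt
  have hBD : q ^ b < p * q ^ b := (Nat.lt_mul_iff_one_lt_left (by omega)).mpr hp.one_lt
  have hDG : p * q ^ b < p ^ a * q ^ b :=
    (Nat.mul_lt_mul_right (by omega)).mpr (lt_self_pow₀ hp.one_lt ha)
  have adj {H K : {M : Subgroup G // M ≠ ⊥ ∧ M ≠ ⊤}}
      (hpa : p ^ a ∣ Nat.card H.1 ∨ p ^ a ∣ Nat.card K.1)
      (hqb : q ^ b ∣ Nat.card H.1 ∨ q ^ b ∣ Nat.card K.1) : (comaximalGraph G).Adj H K :=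
    comaximalGraph_adj_iff.mpr
      ((IsCyclic.sup_eq_top_iff_of_card_eq_pow_mul_pow hp hq hpq hG).mpr ⟨hpa, hqb⟩)
  refine SimpleGraph.egirth_le_four (a := ⟨A, vertex hA hA1 (hAC.trans hCG)⟩)
    (b := ⟨B, vertex hB hB1 (hBD.trans hDG)⟩) (c := ⟨C, vertex hC (hA1.trans hAC) hCG⟩)
    (d := ⟨D, vertex hD (hB1.trans hBD) hDG⟩) (adj ?_ ?_) (adj ?_ ?_) (adj ?_ ?_) (adj ?_ ?_)
    (fun h => hAC.ne (by rw [← hC, ← hA, Subtype.mk.inj h]))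
    (fun h => hBD.ne (by rw [← hD, ← hB, Subtype.mk.inj h]))
  all_goals simp [hA, hB, hC, hD]

end TwoPrimes

/-- For distinct primes `p ≠ q` and `a, b ≥ 2`, the girth of
`Γ(Z_{p^a q^b})` is `4`. -/
theorem comaximal_girth_four (p q : ℕ) (hp : p.Prime) (hq : q.Prime)
    (hpq : p ≠ q) (a b : ℕ) (ha : 2 ≤ a) (hb : 2 ≤ b) :
    (comaximalGraph (Multiplicative (ZMod (p ^ a * q ^ b)))).egirth = 4 := by
  have : NeZero (p ^ a * q ^ b) := ⟨by have := hp.pos; have := hq.pos; positivity⟩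
  have hcard : Nat.card (Multiplicative (ZMod (p ^ a * q ^ b))) = p ^ a * q ^ b := by simp
  exact le_antisymm (comaximalGraph_egirth_le_four hp hq hpq hcard ha hb)
    (comaximalGraph_cliqueFree_three hp hq hpq hcard).four_le_egirth
end

section
/- The alternating group A₄ on four letters has trivial Frattini subgroup, and yet Γ(A₄) has an isolated vertex: there exists a non-trivial proper subgroup H of A₄ such that HK ≠ A₄ for every non-trivial proper subgroup K of A₄. -/
open scoped Pointwise
open Equiv

private abbrev A4 := alternatingGroup (Fin 4)

private def wc1 : A4 := ⟨swap 0 1 * swap 0 2, by rw [Equiv.Perm.mem_alternatingGroup]; decide⟩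
private def wc2 : A4 := ⟨swap 0 1 * swap 0 3, by rw [Equiv.Perm.mem_alternatingGroup]; decide⟩
private def wa : A4 := ⟨swap 0 1 * swap 2 3, by rw [Equiv.Perm.mem_alternatingGroup]; decide⟩
private def wb : A4 := ⟨swap 0 2 * swap 1 3, by rw [Equiv.Perm.mem_alternatingGroup]; decide⟩

private lemma cardA4 : Nat.card A4 = 12 := by
  rw [Nat.card_eq_fintype_card]; decide

private lemma card_subgroup_finset (K : Subgroup A4) (S : Finset A4) (hS : ∀ x ∈ S, x ∈ K) :
    S.card ≤ Nat.card K := by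
  have h1 : Nat.card K = (K : Set A4).ncard := Nat.card_coe_set_eq _
  have h2 : (S : Set A4).ncard = S.card := Set.ncard_coe_finset S
  rw [h1, ← h2]
  exact Set.ncard_le_ncard (fun x hx => hS x (by simpa using hx)) (Set.toFinite _)

/-- A₄ has no subgroup of order 6. -/
private lemma no_order_six (K : Subgroup A4) : Nat.card K ≠ 6 := by
  intro h6
  have hmi := Subgroup.card_mul_index K
  rw [h6, cardA4] at hmi
  have hidx : K.index = 2 := by omega
  have hc1 : wc1 ∈ K := by
    have := Subgroup.sq_mem_of_index_two hidx (wc1 ^ 2)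
    have he : (wc1 ^ 2) ^ 2 = wc1 := by decide
    rwa [he] at this
  have hc2 : wc2 ∈ K := by
    have := Subgroup.sq_mem_of_index_two hidx (wc2 ^ 2)
    have he : (wc2 ^ 2) ^ 2 = wc2 := by decide
    rwa [he] at this
  have hsub : ∀ x ∈ ({1, wc1, wc1^2, wc2, wc2^2, wc1*wc2, wc2*wc1} : Finset A4), x ∈ K := by
    intro x hx
    fin_cases hx
    · exact one_mem K
    · exact hc1
    · exact pow_mem hc1 2
    · exact hc2
    · exact pow_mem hc2 2
    · exact mul_mem hc1 hc2
    · exact mul_mem hc2 hc1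
  have hcard : ({1, wc1, wc1^2, wc2, wc2^2, wc1*wc2, wc2*wc1} : Finset A4).card = 7 := by decide
  have := card_subgroup_finset K _ hsub
  omega

private lemma divisor_cases {n : ℕ} (h : n ∣ 12) :
    n = 1 ∨ n = 2 ∨ n = 3 ∨ n = 4 ∨ n = 6 ∨ n = 12 := by
  have : n ∈ Nat.divisors 12 := Nat.mem_divisors.mpr ⟨h, by norm_num⟩
  fin_cases this <;> simp

/-- Any subgroup of A₄ of cardinality 3 or 4 is maximal. -/
private lemma maximal_of_card (M : Subgroup A4) (hM : Nat.card M = 3 ∨ Nat.card M = 4) :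
    IsCoatom M := by
  constructor
  · intro htop
    rw [htop, Subgroup.card_top, cardA4] at hM
    omega
  · intro N hMN
    have hle : M ≤ N := le_of_lt hMN
    have hdvd : Nat.card M ∣ Nat.card N := Subgroup.card_dvd_of_le hle
    have hdvd12 : Nat.card N ∣ Nat.card A4 := Subgroup.card_subgroup_dvd_card N
    rw [cardA4] at hdvd12
    have h6 := no_order_six N
    have hne : Nat.card N ≠ Nat.card M := by
      intro he
      exact absurd (Subgroup.eq_of_le_of_card_ge hle he.le) (ne_of_lt hMN)
    have h12 : Nat.card N = 12 := by
      rcases hM with hM | hM <;> rw [hM] at hdvd hne <;>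
        rcases divisor_cases hdvd12 with h | h | h | h | h | h <;>
        rw [h] at hdvd hne h6 ⊢ <;> omega
    exact Subgroup.eq_top_of_card_eq N (by rw [h12, cardA4])


private def SV : Finset A4 := {1, wa, wb, wa * wb}

private def VK : Subgroup A4 where
  carrier := ↑SV
  one_mem' := by decide
  mul_mem' := fun {a b} ha hb => by
    have key : ∀ x ∈ SV, ∀ y ∈ SV, x * y ∈ SV := by decide
    exact key a (Finset.mem_coe.mp ha) b (Finset.mem_coe.mp hb)
  inv_mem' := fun {a} ha => by
    have key : ∀ x ∈ SV, x⁻¹ ∈ SV := by decide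
    exact key a (Finset.mem_coe.mp ha)

private lemma cardVK : Nat.card VK = 4 := by
  show Nat.card (VK : Set A4) = 4
  rw [Nat.card_coe_set_eq]
  show (↑SV : Set A4).ncard = 4
  rw [Set.ncard_coe_finset]
  decide

/-- The alternating group `A₄` has trivial Frattini subgroup, yet `Γ(A₄)` has
an isolated vertex. -/
theorem alternating_four_frattini_trivial_isolated :
    frattini (alternatingGroup (Fin 4)) = ⊥ ∧
    ∃ H : Subgroup (alternatingGroup (Fin 4)), H ≠ ⊥ ∧ H ≠ ⊤ ∧
      ∀ K : Subgroup (alternatingGroup (Fin 4)), K ≠ ⊥ → K ≠ ⊤ →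
        (H : Set (alternatingGroup (Fin 4))) * (K : Set (alternatingGroup (Fin 4)))
          ≠ Set.univ := by
  constructor
  · -- Frattini is trivial
    have hM1card : Nat.card (Subgroup.zpowers wc1) = 3 := by
      rw [Nat.card_zpowers]
      exact orderOf_eq_prime (by decide) (by decide)
    have h1 : frattini A4 ≤ Subgroup.zpowers wc1 :=
      frattini_le_coatom (maximal_of_card _ (Or.inl hM1card))
    have h2 : frattini A4 ≤ VK :=
      frattini_le_coatom (maximal_of_card _ (Or.inr cardVK))
    have d1 : Nat.card (frattini A4) ∣ 3 := hM1card ▸ Subgroup.card_dvd_of_le h1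
    have d2 : Nat.card (frattini A4) ∣ 4 := by
      have := Subgroup.card_dvd_of_le h2; rwa [cardVK] at this
    exact Subgroup.eq_bot_of_card_eq _ (Nat.dvd_one.mp (Nat.dvd_gcd d1 d2))
  · refine ⟨Subgroup.zpowers wa, ?_, ?_, ?_⟩
    · intro hbot
      have h2 : Nat.card (Subgroup.zpowers wa) = 2 := by
        rw [Nat.card_zpowers]; exact orderOf_eq_prime (by decide) (by decide)
      rw [hbot, Subgroup.card_bot] at h2
      exact absurd h2 (by norm_num)
    · intro htop
      have h2 : Nat.card (Subgroup.zpowers wa) = 2 := by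
        rw [Nat.card_zpowers]; exact orderOf_eq_prime (by decide) (by decide)
      rw [htop, Subgroup.card_top, cardA4] at h2
      exact absurd h2 (by norm_num)
    · intro K hKbot hKtop heq
      have h2 : Nat.card (Subgroup.zpowers wa) = 2 := by
        rw [Nat.card_zpowers]; exact orderOf_eq_prime (by decide) (by decide)
      have hK1 : Nat.card K ≠ 1 := fun h => hKbot (Subgroup.eq_bot_of_card_eq K h)
      have hK12 : Nat.card K ≠ 12 := fun h =>
        hKtop (Subgroup.eq_top_of_card_eq K (by rw [h, cardA4]))
      have hK6 := no_order_six K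
      have hKdvd : Nat.card K ∣ 12 := cardA4 ▸ Subgroup.card_subgroup_dvd_card K
      have hK4 : Nat.card K ≤ 4 := by
        rcases divisor_cases hKdvd with h | h | h | h | h | h <;>
          first
          | omega
          | (exfalso; first | exact hK1 h | exact hK6 h | exact hK12 h)
      have hle := Set.natCard_mul_le
        (s := ((Subgroup.zpowers wa : Subgroup A4) : Set A4)) (t := (K : Set A4))
      rw [heq, Nat.card_univ, cardA4] at hle
      have e1 : Nat.card ((Subgroup.zpowers wa : Subgroup A4) : Set A4) = 2 := h2
      have e2 : Nat.card (K : Set A4) = Nat.card K := rfl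
      rw [e1, e2] at hle
      omega
end
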